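/- arXiv:math/0202003 — 8 statements merged into one kernel-verified Lean document; each statement's English description precedes it below -/
import Mathlib

section
/- Let X be an infinite-dimensional complex Banach space whose norm is uniformly convex and smooth (i.e., for every nonzero x ∈ X there is a unique bounded linear functional f on X with f(x) = ‖x‖² and ‖f‖ = ‖x‖). Let Q be a nonzero bounded linear operator on X which is quasi-nilpotent (‖Qⁿ‖^(1/n) → 0 as n → ∞) and which satisfies property (★). Then Q has a non-trivial hyperinvariant subspace: there is a closed linear subspace Y of X with Y ≠ {0} and Y ≠ X such that T(Y) ⊆ Y for every bounded linear operator T on X with TQ = QT. -/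
set_option maxHeartbeats 1600000

open Filter Topology Set

section UC
variable {X : Type*} [NormedAddCommGroup X] [NormedSpace ℝ X] [UniformConvexSpace X]

/-- Quantitative uniform convexity at radius `d`. -/
lemma uc_small_diff {d : ℝ} (hd : 0 < d) {η : ℝ} (hη : 0 < η) :
    ∃ θ : ℝ, 0 < θ ∧ ∀ a b : X, ‖a‖ ≤ d + θ → ‖b‖ ≤ d + θ →
      2 * d - θ ≤ ‖a + b‖ → ‖a - b‖ ≤ η := by
  obtain ⟨δ, hδ, hdelta⟩ :=
    exists_forall_closed_ball_dist_add_le_two_sub X (ε := η / (d + 1)) (by positivity)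
  refine ⟨min 1 (δ * d / 4), by positivity, ?_⟩
  intro a b ha hb hmid
  by_contra hcon
  push_neg at hcon
  set θ := min 1 (δ * d / 4) with hθdef
  have hθ1 : θ ≤ 1 := min_le_left _ _
  have hθ2 : θ ≤ δ * d / 4 := min_le_right _ _
  have hθpos : 0 < θ := by positivity
  have hdθ : 0 < d + θ := by positivity
  set a' := (d + θ)⁻¹ • a with ha'def
  set b' := (d + θ)⁻¹ • b with hb'def
  have hna : ‖a'‖ ≤ 1 := by
    rw [ha'def, norm_smul, Real.norm_eq_abs, abs_of_pos (by positivity),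
      inv_mul_le_iff₀ hdθ, mul_one]
    exact ha
  have hnb : ‖b'‖ ≤ 1 := by
    rw [hb'def, norm_smul, Real.norm_eq_abs, abs_of_pos (by positivity),
      inv_mul_le_iff₀ hdθ, mul_one]
    exact hb
  have hsub : η / (d + 1) ≤ ‖a' - b'‖ := by
    have h1 : ‖a' - b'‖ = ‖a - b‖ / (d + θ) := by
      rw [ha'def, hb'def, ← smul_sub, norm_smul, Real.norm_eq_abs,
        abs_of_pos (by positivity), div_eq_inv_mul]
    rw [h1, div_le_div_iff₀ (by positivity) hdθ]
    nlinarith [norm_nonneg (a - b)]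
  have hkey := hdelta hna hnb hsub
  have hab : ‖a + b‖ ≤ (2 - δ) * (d + θ) := by
    have h2 : ‖a + b‖ = (d + θ) * ‖a' + b'‖ := by
      rw [ha'def, hb'def, ← smul_add, norm_smul, Real.norm_eq_abs,
        abs_of_pos (by positivity)]
      field_simp
    rw [h2, mul_comm]
    exact mul_le_mul_of_nonneg_right hkey hdθ.le
  nlinarith


variable [CompleteSpace X]

/-- Every nonempty closed convex set in a uniformly convex complete space has an
element of minimal norm. -/
lemma exists_min_norm_point {C : Set X} (hne : C.Nonempty) (hcl : IsClosed C)
    (hconv : Convex ℝ C) : ∃ c ∈ C, ∀ p ∈ C, ‖c‖ ≤ ‖p‖ := by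
  set d := sInf (norm '' C) with hddef
  have hbdd : BddBelow (norm '' C) := ⟨0, by rintro - ⟨p, -, rfl⟩; exact norm_nonneg p⟩
  have hd0 : 0 ≤ d := le_csInf (hne.image _) (by rintro - ⟨p, -, rfl⟩; exact norm_nonneg p)
  have hlb : ∀ p ∈ C, d ≤ ‖p‖ := fun p hp => csInf_le hbdd ⟨p, hp, rfl⟩
  have hseq : ∀ n : ℕ, ∃ p ∈ C, ‖p‖ < d + 1 / (n + 1) := by
    intro n
    have : d < d + 1 / ((n:ℝ) + 1) := by
      have : (0:ℝ) < 1 / ((n:ℝ) + 1) := by positivity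
      linarith
    obtain ⟨-, ⟨p, hp, rfl⟩, hlt⟩ := exists_lt_of_csInf_lt (hne.image _) this
    exact ⟨p, hp, hlt⟩
  choose c hcC hcn using hseq
  have hinv : ∀ η > (0:ℝ), ∃ N : ℕ, ∀ n ≥ N, 1 / ((n:ℝ) + 1) ≤ η := by
    intro η hη
    obtain ⟨N, hN⟩ := exists_nat_one_div_lt hη
    refine ⟨N, fun n hn => ?_⟩
    calc 1 / ((n:ℝ) + 1) ≤ 1 / ((N:ℝ) + 1) := by
          apply one_div_le_one_div_of_le (by positivity)
          have : (N:ℝ) ≤ (n:ℝ) := Nat.cast_le.2 hn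
          linarith
      _ ≤ η := hN.le
  have key : ∀ η > (0:ℝ), ∃ N, ∀ i ≥ N, ∀ j ≥ N, ‖c i - c j‖ ≤ η := by
    intro η hη
    rcases eq_or_lt_of_le hd0 with hdz | hdpos
    · -- d = 0
      obtain ⟨N, hN⟩ := hinv (η / 2) (by positivity)
      refine ⟨N, fun i hi j hj => ?_⟩
      have hci : ‖c i‖ ≤ η / 2 := by
        have := hcn i
        have := hN i hi
        rw [← hdz] at *
        linarith
      have hcj : ‖c j‖ ≤ η / 2 := by
        have := hcn j
        have := hN j hj
        rw [← hdz] at *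
        linarith
      calc ‖c i - c j‖ ≤ ‖c i‖ + ‖c j‖ := norm_sub_le _ _
        _ ≤ η := by linarith
    · obtain ⟨θ, hθ, hθkey⟩ := uc_small_diff (X := X) hdpos hη
      obtain ⟨N, hN⟩ := hinv θ hθ
      refine ⟨N, fun i hi j hj => ?_⟩
      have hmidC : ((1:ℝ)/2) • c i + ((1:ℝ)/2) • c j ∈ C :=
        hconv (hcC i) (hcC j) (by norm_num) (by norm_num) (by norm_num)
      have hmid : 2 * d - θ ≤ ‖c i + c j‖ := by
        have h1 : d ≤ ‖((1:ℝ)/2) • c i + ((1:ℝ)/2) • c j‖ := hlb _ hmidC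
        have h2 : ‖((1:ℝ)/2) • c i + ((1:ℝ)/2) • c j‖ = (1/2) * ‖c i + c j‖ := by
          rw [← smul_add, norm_smul, Real.norm_eq_abs]
          norm_num
        rw [h2] at h1
        linarith
      exact hθkey _ _ (by have := hcn i; have := hN i hi; linarith)
        (by have := hcn j; have := hN j hj; linarith) hmid
  have hcauchy : CauchySeq c := by
    rw [Metric.cauchySeq_iff]
    intro ε hε
    obtain ⟨N, hN⟩ := key (ε / 2) (by positivity)
    exact ⟨N, fun m hm n hn => by
      have := hN m hm n hn
      rw [dist_eq_norm]
      linarith⟩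
  obtain ⟨l, hl⟩ := cauchySeq_tendsto_of_complete hcauchy
  have hlC : l ∈ C := hcl.mem_of_tendsto hl (Eventually.of_forall hcC)
  refine ⟨l, hlC, fun p hp => ?_⟩
  have hnorm : Tendsto (fun n => ‖c n‖) atTop (𝓝 ‖l‖) := (continuous_norm.tendsto l).comp hl
  have hld : ‖l‖ ≤ d := by
    have hub : Tendsto (fun n : ℕ => d + 1 / ((n:ℝ) + 1)) atTop (𝓝 (d + 0)) :=
      tendsto_const_nhds.add (tendsto_one_div_add_atTop_nhds_zero_nat)
    rw [add_zero] at hub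
    exact le_of_tendsto_of_tendsto' hnorm hub fun n => (hcn n).le
  exact hld.trans (hlb p hp)


/-- Nested nonempty bounded closed convex sets in a uniformly convex complete space
have a common point. -/
lemma nested_convex_inter {H : ℕ → Set X} (hne : ∀ n, (H n).Nonempty)
    (hcl : ∀ n, IsClosed (H n)) (hconv : ∀ n, Convex ℝ (H n))
    (hmono : ∀ m n, m ≤ n → H n ⊆ H m) {M : ℝ} (hbdd : ∀ p ∈ H 0, ‖p‖ ≤ M) :
    ∃ z, ∀ n, z ∈ H n := by
  have hmin : ∀ n, ∃ c ∈ H n, ∀ p ∈ H n, ‖c‖ ≤ ‖p‖ := fun n =>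
    exists_min_norm_point (hne n) (hcl n) (hconv n)
  choose c hcH hcmin using hmin
  set dd : ℕ → ℝ := fun n => ‖c n‖ with hdd
  have hdmono : Monotone dd := fun m n hmn => hcmin m (c n) (hmono m n hmn (hcH n))
  have hdb : ∀ n, dd n ≤ M := fun n => hbdd (c n) (hmono 0 n (Nat.zero_le n) (hcH n))
  set d := ⨆ n, dd n with hd
  have hbddA : BddAbove (Set.range dd) := ⟨M, by rintro - ⟨n, rfl⟩; exact hdb n⟩
  have hdup : ∀ n, dd n ≤ d := fun n => le_ciSup hbddA n
  have hd0 : 0 ≤ d := le_trans (norm_nonneg (c 0)) (hdup 0)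
  have key : ∀ η > (0:ℝ), ∃ N, ∀ i ≥ N, ∀ j ≥ N, ‖c i - c j‖ ≤ η := by
    intro η hη
    rcases eq_or_lt_of_le hd0 with hdz | hdpos
    · refine ⟨0, fun i _ j _ => ?_⟩
      have h1 : dd i ≤ 0 := le_of_le_of_eq (hdup i) hdz.symm
      have h2 : dd j ≤ 0 := le_of_le_of_eq (hdup j) hdz.symm
      calc ‖c i - c j‖ ≤ ‖c i‖ + ‖c j‖ := norm_sub_le _ _
        _ ≤ η := by simp only [hdd] at h1 h2; nlinarith [norm_nonneg (c i), norm_nonneg (c j)]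
    · obtain ⟨θ, hθ, hθkey⟩ := uc_small_diff (X := X) hdpos hη
      have hlt : d - θ / 2 < d := by linarith
      obtain ⟨N, hNd⟩ := exists_lt_of_lt_ciSup (lt_of_lt_of_le hlt (le_refl d))
      refine ⟨N, fun i hi j hj => ?_⟩
      have hmidH : ((1:ℝ)/2) • c i + ((1:ℝ)/2) • c j ∈ H N :=
        (hconv N) (hmono N i hi (hcH i)) (hmono N j hj (hcH j))
          (by norm_num) (by norm_num) (by norm_num)
      have hmid : 2 * d - θ ≤ ‖c i + c j‖ := by
        have h1 : dd N ≤ ‖((1:ℝ)/2) • c i + ((1:ℝ)/2) • c j‖ := hcmin N _ hmidH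
        have h2 : ‖((1:ℝ)/2) • c i + ((1:ℝ)/2) • c j‖ = (1/2) * ‖c i + c j‖ := by
          rw [← smul_add, norm_smul, Real.norm_eq_abs]
          norm_num
        rw [h2] at h1
        linarith
      exact hθkey _ _ (by have := hdup i; simp only [hdd] at this; linarith)
        (by have := hdup j; simp only [hdd] at this; linarith) hmid
  have hcauchy : CauchySeq c := by
    rw [Metric.cauchySeq_iff]
    intro ε hε
    obtain ⟨N, hN⟩ := key (ε / 2) (by positivity)
    exact ⟨N, fun m hm n hn => by
      have := hN m hm n hn
      rw [dist_eq_norm]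
      linarith⟩
  obtain ⟨l, hl⟩ := cauchySeq_tendsto_of_complete hcauchy
  refine ⟨l, fun n => ?_⟩
  have : Tendsto (fun k => c (k + n)) atTop (𝓝 l) := hl.comp (tendsto_add_atTop_nat n)
  exact (hcl n).mem_of_tendsto this
    (Eventually.of_forall fun k => hmono n (k + n) (Nat.le_add_left n k) (hcH (k + n)))


end UC

section WeakCompact
variable {X : Type*} [NormedAddCommGroup X] [NormedSpace ℂ X] [CompleteSpace X]
  [UniformConvexSpace X]

/-- values of a functional on a closed convex hull are controlled by values on the set -/
lemma hull_est (f : X →L[ℂ] ℂ) (b : ℂ) (δ : ℝ) (s : Set X)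
    (h : ∀ p ∈ s, ‖f p - b‖ ≤ δ) :
    ∀ q ∈ closure (convexHull ℝ s), ‖f q - b‖ ≤ δ := by
  have hT : {p : X | ‖f p - b‖ ≤ δ} = (f.restrictScalars ℝ) ⁻¹' (Metric.closedBall b δ) := by
    ext p
    simp [Metric.mem_closedBall, dist_eq_norm]
  have hTconv : Convex ℝ {p : X | ‖f p - b‖ ≤ δ} := by
    rw [hT]
    exact (convex_closedBall b δ).linear_preimage ((f.restrictScalars ℝ) : X →ₗ[ℝ] ℂ)
  have hTcl : IsClosed {p : X | ‖f p - b‖ ≤ δ} := by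
    rw [hT]
    exact IsClosed.preimage (f.restrictScalars ℝ).continuous Metric.isClosed_closedBall
  intro q hq
  exact closure_minimal (convexHull_min h hTconv) hTcl hq


/-- Elementary weak sequential compactness of bounded sequences in a uniformly convex
complete space. -/
theorem weak_seq_compact (x : ℕ → X) (M : ℝ) (hx : ∀ n, ‖x n‖ ≤ M) :
    ∃ φ : ℕ → ℕ, StrictMono φ ∧ ∃ z : X,
      ∀ f : X →L[ℂ] ℂ, Tendsto (fun k => f (x (φ k))) atTop (𝓝 (f z)) := by
  classical
  set W := Submodule.span ℂ (Set.range x) with hWdef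
  set V := W.topologicalClosure with hVdef
  have hVcoe : (V : Set X) = closure (W : Set X) := rfl
  have hWsep : TopologicalSpace.IsSeparable (W : Set X) :=
    (Set.countable_range x).isSeparable.span
  have hVsep : TopologicalSpace.IsSeparable (V : Set X) := by
    rw [hVcoe]
    exact TopologicalSpace.isSeparable_closure.2 hWsep
  obtain ⟨cset, hccount, hcsub⟩ := hVsep
  have hcne : cset.Nonempty := by
    rcases cset.eq_empty_or_nonempty with h | h
    · exfalso
      have h0 : (0 : X) ∈ (V : Set X) := V.zero_mem
      have := hcsub h0
      rw [h, closure_empty] at this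
      exact this
    · exact h
  obtain ⟨dseq, hdseq⟩ := hccount.exists_eq_range hcne
  have hf : ∀ j, ∃ g : X →L[ℂ] ℂ, ‖g‖ ≤ 1 ∧ g (dseq j) = (‖dseq j‖ : ℂ) := by
    intro j
    by_cases hj : dseq j = 0
    · exact ⟨0, by simp, by simp [hj]⟩
    · obtain ⟨g, h1, h2⟩ := exists_dual_vector ℂ (dseq j) (norm_ne_zero_iff.2 hj)
      exact ⟨g, h1.le, h2⟩
  choose F hF1 hF2 using hf
  -- norming property
  have hnorming : ∀ y, y ∈ (V : Set X) → (∀ j, F j y = 0) → y = 0 := by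
    intro y hy h0
    have key : ∀ η : ℝ, 0 < η → ‖y‖ ≤ 2 * η := by
      intro η hη
      have hyc : y ∈ closure cset := hcsub hy
      obtain ⟨p, hp, hyp⟩ := Metric.mem_closure_iff.1 hyc η hη
      rw [hdseq] at hp
      obtain ⟨j, rfl⟩ := hp
      have h1 : ‖dseq j‖ ≤ η := by
        have : ‖F j (dseq j)‖ = ‖dseq j‖ := by
          rw [hF2 j, Complex.norm_real, Real.norm_eq_abs, abs_of_nonneg (norm_nonneg _)]
        have h2 : ‖F j (dseq j)‖ = ‖F j (dseq j) - F j y‖ := by rw [h0 j, sub_zero]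
        have h3 : ‖F j (dseq j) - F j y‖ = ‖F j (dseq j - y)‖ := by rw [map_sub]
        have h4 : ‖F j (dseq j - y)‖ ≤ ‖F j‖ * ‖dseq j - y‖ := (F j).le_opNorm _
        have h5 : ‖dseq j - y‖ < η := by
          rw [← dist_eq_norm, dist_comm]
          exact hyp
        nlinarith [hF1 j, norm_nonneg (dseq j - y), dist_nonneg (x := dseq j) (y := y)]
      have h6 : ‖y - dseq j‖ < η := by rw [← dist_eq_norm]; exact hyp
      calc ‖y‖ = ‖(y - dseq j) + dseq j‖ := by rw [sub_add_cancel]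
        _ ≤ ‖y - dseq j‖ + ‖dseq j‖ := norm_add_le _ _
        _ ≤ 2 * η := by linarith
    by_contra hy0
    have hpos : 0 < ‖y‖ := norm_pos_iff.2 hy0
    have := key (‖y‖ / 4) (by positivity)
    linarith
  -- diagonal extraction
  have hM0 : 0 ≤ M := (norm_nonneg (x 0)).trans (hx 0)
  set g : ℕ → (ℕ → ℂ) := fun n j => F j (x n) with hgdef
  have hgS : ∀ n, g n ∈ Set.univ.pi (fun _ : ℕ => Metric.closedBall (0:ℂ) M) := by
    intro n j _
    simp only [Metric.mem_closedBall, dist_zero_right]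
    calc ‖F j (x n)‖ ≤ ‖F j‖ * ‖x n‖ := (F j).le_opNorm _
      _ ≤ 1 * M := by
          apply mul_le_mul (hF1 j) (hx n) (norm_nonneg _) zero_le_one
      _ = M := one_mul M
  obtain ⟨a, -, φ, hφ, hconv⟩ :=
    (isCompact_univ_pi (fun _ : ℕ => isCompact_closedBall (0:ℂ) M)).tendsto_subseq hgS
  have hptwise : ∀ j, Tendsto (fun k => F j (x (φ k))) atTop (𝓝 (a j)) := by
    intro j
    exact (tendsto_pi_nhds.1 hconv) j
  set u : ℕ → X := fun k => x (φ k) with hudef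
  -- nested hulls of tails
  set H : ℕ → Set X := fun m => closure (convexHull ℝ (u '' Set.Ici m)) with hHdef
  have hHne : ∀ m, (H m).Nonempty :=
    fun m => ⟨u m, subset_closure (subset_convexHull ℝ _ ⟨m, mem_Ici.2 le_rfl, rfl⟩)⟩
  have hHcl : ∀ m, IsClosed (H m) := fun m => isClosed_closure
  have hHconv : ∀ m, Convex ℝ (H m) := fun m => (convex_convexHull ℝ _).closure
  have hHmono : ∀ m n, m ≤ n → H n ⊆ H m := fun m n h =>
    closure_mono (convexHull_mono (image_mono (Ici_subset_Ici.2 h)))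
  have hHbdd : ∀ p ∈ H 0, ‖p‖ ≤ M := by
    intro p hp
    have : H 0 ⊆ Metric.closedBall 0 M := by
      apply closure_minimal
      apply convexHull_min
      · rintro - ⟨k, -, rfl⟩
        simpa [Metric.mem_closedBall, dist_zero_right] using hx (φ k)
      · exact convex_closedBall 0 M
      · exact Metric.isClosed_closedBall
    simpa [Metric.mem_closedBall, dist_zero_right] using this hp
  obtain ⟨z, hz⟩ := nested_convex_inter hHne hHcl hHconv hHmono hHbdd
  -- F j is constant a j on ∩ H m
  have hlim : ∀ (j : ℕ) (z' : X), (∀ m, z' ∈ H m) → F j z' = a j := by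
    intro j z' hz'
    have hle : ∀ δ : ℝ, 0 < δ → ‖F j z' - a j‖ ≤ δ := by
      intro δ hδ
      obtain ⟨m, hm⟩ := (Metric.tendsto_atTop.1 (hptwise j)) δ hδ
      refine hull_est (F j) (a j) δ (u '' Set.Ici m) ?_ z' (hz' m)
      rintro - ⟨k, hk, rfl⟩
      have := hm k hk
      rw [dist_eq_norm] at this
      exact this.le
    by_contra hne'
    have hpos : 0 < ‖F j z' - a j‖ := by
      rw [norm_pos_iff, sub_ne_zero]
      exact hne'
    have := hle (‖F j z' - a j‖ / 2) (by positivity)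
    linarith
  have hHV : H 0 ⊆ (V : Set X) := by
    have h1 : u '' Set.Ici 0 ⊆ (W : Set X) := by
      rintro - ⟨k, -, rfl⟩
      exact Submodule.subset_span ⟨φ k, rfl⟩
    have h2 : Convex ℝ (W : Set X) := by
      have := (W.restrictScalars ℝ).convex
      simpa using this
    rw [hVcoe]
    exact closure_mono (convexHull_min h1 h2)
  refine ⟨φ, hφ, z, fun f => ?_⟩
  by_contra hnot
  rw [Metric.tendsto_atTop] at hnot
  push_neg at hnot
  obtain ⟨δ, hδ, hbad⟩ := hnot
  have hfreq : ∃ᶠ k in atTop, δ ≤ dist (f (u k)) (f z) := by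
    rw [frequently_atTop]
    intro N
    obtain ⟨k, hk1, hk2⟩ := hbad N
    exact ⟨k, hk1, hk2⟩
  obtain ⟨ψ, hψmono, hψ⟩ := extraction_of_frequently_atTop hfreq
  have hvb : ∀ i, f (u (ψ i)) ∈ Metric.closedBall (0:ℂ) (‖f‖ * M) := by
    intro i
    simp only [Metric.mem_closedBall, dist_zero_right]
    calc ‖f (u (ψ i))‖ ≤ ‖f‖ * ‖u (ψ i)‖ := f.le_opNorm _
      _ ≤ ‖f‖ * M := mul_le_mul_of_nonneg_left (hx _) (norm_nonneg f)
  obtain ⟨b, -, ψ', hψ'mono, hb⟩ :=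
    (isCompact_closedBall (0:ℂ) (‖f‖ * M)).tendsto_subseq hvb
  have hb' : Tendsto (fun i => f (u (ψ (ψ' i)))) atTop (𝓝 b) := hb
  have hbz : δ ≤ dist b (f z) := by
    have hd : Tendsto (fun i => dist (f (u (ψ (ψ' i)))) (f z)) atTop (𝓝 (dist b (f z))) :=
      (Continuous.dist continuous_id continuous_const).continuousAt.tendsto.comp hb'
    exact ge_of_tendsto hd (Eventually.of_forall fun i => hψ (ψ' i))
  set v : ℕ → X := fun i => u (ψ (ψ' i)) with hvdef
  set H' : ℕ → Set X := fun m => closure (convexHull ℝ (v '' Set.Ici m)) with hH'def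
  have hH'H : ∀ m, H' m ⊆ H m := by
    intro m
    apply closure_mono
    apply convexHull_mono
    rintro - ⟨i, hi, rfl⟩
    exact ⟨ψ (ψ' i), le_trans hi (le_trans (hψ'mono.le_apply) (hψmono.le_apply)), rfl⟩
  have hH'ne : ∀ m, (H' m).Nonempty :=
    fun m => ⟨v m, subset_closure (subset_convexHull ℝ _ ⟨m, mem_Ici.2 le_rfl, rfl⟩)⟩
  have hH'cl : ∀ m, IsClosed (H' m) := fun m => isClosed_closure
  have hH'conv : ∀ m, Convex ℝ (H' m) := fun m => (convex_convexHull ℝ _).closure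
  have hH'mono : ∀ m n, m ≤ n → H' n ⊆ H' m := fun m n h =>
    closure_mono (convexHull_mono (image_mono (Ici_subset_Ici.2 h)))
  have hH'bdd : ∀ p ∈ H' 0, ‖p‖ ≤ M := fun p hp => hHbdd p (hH'H 0 hp)
  obtain ⟨z', hz'⟩ := nested_convex_inter hH'ne hH'cl hH'conv hH'mono hH'bdd
  have hz'H : ∀ m, z' ∈ H m := fun m => hH'H m (hz' m)
  have hFz' : ∀ j, F j z' = a j := fun j => hlim j z' hz'H
  have hFz : ∀ j, F j z = a j := fun j => hlim j z hz
  have hfz' : f z' = b := by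
    have hle : ∀ η : ℝ, 0 < η → ‖f z' - b‖ ≤ η := by
      intro η hη
      obtain ⟨m, hm⟩ := (Metric.tendsto_atTop.1 hb') η hη
      refine hull_est f b η (v '' Set.Ici m) ?_ z' (hz' m)
      rintro - ⟨i, hi, rfl⟩
      have := hm i hi
      rw [dist_eq_norm] at this
      exact this.le
    by_contra hne'
    have hpos : 0 < ‖f z' - b‖ := by
      rw [norm_pos_iff, sub_ne_zero]
      exact hne'
    have := hle (‖f z' - b‖ / 2) (by positivity)
    linarith
  have hzV : z ∈ (V : Set X) := hHV (hz 0)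
  have hz'V : z' ∈ (V : Set X) := hHV (hz'H 0)
  have hdiff : z - z' ∈ (V : Set X) := V.sub_mem hzV hz'V
  have : z - z' = 0 := by
    apply hnorming _ hdiff
    intro j
    rw [map_sub, hFz j, hFz' j, sub_self]
  have hzz' : z = z' := sub_eq_zero.1 this
  rw [hzz', hfz'] at hbz
  simp at hbz
  linarith

end WeakCompact

section Helpers
variable {X : Type*} [NormedAddCommGroup X] [NormedSpace ℂ X]

def commOrbit (Q : X →L[ℂ] X) (w : X) : Submodule ℂ X where
  carrier := {v | ∃ T : X →L[ℂ] X, T ∘L Q = Q ∘L T ∧ T w = v}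
  add_mem' := by
    rintro a b ⟨T, hT, rfl⟩ ⟨S, hS, rfl⟩
    exact ⟨T + S, by rw [ContinuousLinearMap.add_comp, ContinuousLinearMap.comp_add, hT, hS],
      rfl⟩
  zero_mem' := ⟨0, by simp, by simp⟩
  smul_mem' := by
    rintro c a ⟨T, hT, rfl⟩
    exact ⟨c • T, by rw [ContinuousLinearMap.smul_comp, ContinuousLinearMap.comp_smulₛₗ]
                     simp [hT], rfl⟩

lemma mem_commOrbit_self (Q : X →L[ℂ] X) (w : X) : w ∈ commOrbit Q w :=
  ⟨ContinuousLinearMap.id ℂ X, by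
    rw [ContinuousLinearMap.id_comp, ContinuousLinearMap.comp_id], rfl⟩

lemma commOrbit_closure_invariant (Q T : X →L[ℂ] X) (hT : T ∘L Q = Q ∘L T) (w : X) :
    ∀ y ∈ (commOrbit Q w).topologicalClosure, T y ∈ (commOrbit Q w).topologicalClosure := by
  intro y hy
  have hy' : y ∈ closure (commOrbit Q w : Set X) := hy
  have hmaps : Set.MapsTo ⇑T (commOrbit Q w : Set X) (commOrbit Q w : Set X) := by
    rintro - ⟨S, hS, rfl⟩
    exact ⟨T ∘L S, by
      rw [ContinuousLinearMap.comp_assoc, hS, ← ContinuousLinearMap.comp_assoc, hT,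
        ContinuousLinearMap.comp_assoc], rfl⟩
  exact map_mem_closure T.continuous hy' hmaps

end Helpers


/-- Theorem 2.2 (renormed form): a nonzero quasi-nilpotent operator with property (★)
on an infinite-dimensional uniformly convex and smooth complex Banach space has a
non-trivial hyperinvariant subspace. -/
theorem exists_hyperinvariant_subspace_of_quasinilpotent_star
    {X : Type*} [NormedAddCommGroup X] [NormedSpace ℂ X] [CompleteSpace X]
    [UniformConvexSpace X]
    (h_inf : ¬ FiniteDimensional ℂ X)
    (h_smooth : ∀ x : X, x ≠ 0 → ∃! f : X →L[ℂ] ℂ, f x = (‖x‖ : ℂ) ^ 2 ∧ ‖f‖ = ‖x‖)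
    (Q : X →L[ℂ] X) (hQ : Q ≠ 0)
    (hquasi : Tendsto (fun n : ℕ => ‖Q ^ n‖ ^ ((1 : ℝ) / n)) atTop (𝓝 0))
    (hstar : ∀ ε : ℝ, 0 < ε → ε < 1 → ∃ x₀ : X, ‖x₀‖ = 1 ∧
      ∀ x : ℕ → X,
        (∃ z : X, ∀ f : X →L[ℂ] ℂ, Tendsto (fun m => f (x m)) atTop (𝓝 (f z))) →
        (∀ m, ‖x m - x₀‖ = ε) →
        ∃ (n : ℕ → ℕ) (K : ℕ → X →L[ℂ] X), StrictMono n ∧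
          (∀ k, (K k) ∘L Q = Q ∘L (K k)) ∧
          (∀ k, ‖K k‖ ≤ 1 ∧ (1 + ε) / 2 ≤ ‖(K k) x₀‖) ∧
          (∃ w : X, Tendsto (fun k => (K k) (x (n k))) atTop (𝓝 w))) :
    ∃ Y : Submodule ℂ X, IsClosed (Y : Set X) ∧ Y ≠ ⊥ ∧ Y ≠ ⊤ ∧
      ∀ T : X →L[ℂ] X, T ∘L Q = Q ∘L T → ∀ y ∈ Y, T y ∈ Y := by
  by_cases hk : ∃ v : X, v ≠ 0 ∧ Q v = 0
  · obtain ⟨v, hv0, hv⟩ := hk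
    refine ⟨LinearMap.ker (Q : X →ₗ[ℂ] X), ?_, ?_, ?_, ?_⟩
    · exact ContinuousLinearMap.isClosed_ker Q
    · intro h
      have : v ∈ LinearMap.ker (Q : X →ₗ[ℂ] X) := LinearMap.mem_ker.2 hv
      rw [h, Submodule.mem_bot] at this
      exact hv0 this
    · intro h
      apply hQ
      ext u
      have : u ∈ LinearMap.ker (Q : X →ₗ[ℂ] X) := by rw [h]; trivial
      simpa using this
    · intro T hT y hy
      have hy' : Q y = 0 := LinearMap.mem_ker.1 hy
      have h1 : T (Q y) = Q (T y) := by
        have := ContinuousLinearMap.ext_iff.1 hT y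
        simpa using this
      rw [LinearMap.mem_ker, ContinuousLinearMap.coe_coe]
      rw [← h1, hy', map_zero]
  push_neg at hk
  have hinj : ∀ v : X, Q v = 0 → v = 0 := by
    intro v hv
    by_contra h
    exact hk v h hv
  by_cases hr : Dense (Set.range ⇑Q)
  swap
  · refine ⟨(LinearMap.range (Q : X →ₗ[ℂ] X)).topologicalClosure, ?_, ?_, ?_, ?_⟩
    · exact Submodule.isClosed_topologicalClosure _
    · intro h
      obtain ⟨u, hu⟩ : ∃ u : X, Q u ≠ 0 := by
        by_contra hc
        push_neg at hc
        exact hQ (ContinuousLinearMap.ext fun u => by simpa using hc u)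
      have : Q u ∈ (LinearMap.range (Q : X →ₗ[ℂ] X)).topologicalClosure :=
        Submodule.le_topologicalClosure _ (LinearMap.mem_range_self _ u)
      rw [h, Submodule.mem_bot] at this
      exact hu this
    · intro h
      apply hr
      have h1 : closure (LinearMap.range (Q : X →ₗ[ℂ] X) : Set X) = Set.univ := by
        have := congrArg (fun s : Submodule ℂ X => (s : Set X)) h
        simpa [Submodule.topologicalClosure_coe] using this
      have h2 : (LinearMap.range (Q : X →ₗ[ℂ] X) : Set X) = Set.range ⇑Q := by
        ext u; simp [LinearMap.mem_range]
      rw [← h2]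
      rw [dense_iff_closure_eq, h1]
    · intro T hT y hy
      have hy' : y ∈ closure (LinearMap.range (Q : X →ₗ[ℂ] X) : Set X) := hy
      have hmaps : Set.MapsTo ⇑T (LinearMap.range (Q : X →ₗ[ℂ] X) : Set X) (LinearMap.range (Q : X →ₗ[ℂ] X) : Set X) := by
        rintro - ⟨u, rfl⟩
        refine ⟨T u, ?_⟩
        have := ContinuousLinearMap.ext_iff.1 hT u
        simpa using this.symm
      exact map_mem_closure T.continuous hy' hmaps
  by_cases horb : ∃ w : X, w ≠ 0 ∧ (commOrbit Q w).topologicalClosure ≠ ⊤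
  · obtain ⟨w, hw0, hwt⟩ := horb
    refine ⟨(commOrbit Q w).topologicalClosure, ?_, ?_, hwt, ?_⟩
    · exact Submodule.isClosed_topologicalClosure _
    · intro h
      have : w ∈ (commOrbit Q w).topologicalClosure :=
        Submodule.le_topologicalClosure _ (mem_commOrbit_self Q w)
      rw [h, Submodule.mem_bot] at this
      exact hw0 this
    · intro T hT
      exact commOrbit_closure_invariant Q T hT w
  push_neg at horb
  exfalso
  classical
  -- powers of Q
  have hpow_apply' : ∀ (n : ℕ) (v : X), (Q ^ (n+1)) v = Q ((Q ^ n) v) := by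
    intro n v
    rw [pow_succ']
    rfl
  have hQndense : ∀ n : ℕ, DenseRange ⇑(Q ^ n) := by
    intro n
    induction n with
    | zero =>
        have h1 : ⇑(Q ^ 0) = id := by
          funext v
          simp [pow_zero]
        rw [h1]
        exact denseRange_id
    | succ n ih =>
        have h1 : ⇑(Q ^ (n+1)) = ⇑Q ∘ ⇑(Q ^ n) := by
          funext v
          rw [hpow_apply' n v]
          rfl
        rw [h1]
        exact DenseRange.comp hr ih Q.continuous
  -- x₀ from property (star) with ε = 1/2
  obtain ⟨x₀, hx₀, hstar'⟩ := hstar (1/2) one_half_pos (by norm_num)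
  -- minimal vectors
  set Cs : ℕ → Set X := fun n => {v | ‖(Q ^ n) v - x₀‖ ≤ 1/2} with hCsdef
  have hCne : ∀ n, (Cs n).Nonempty := by
    intro n
    obtain ⟨a, ha⟩ := (hQndense n).exists_dist_lt x₀ (by norm_num : (0:ℝ) < 1/2)
    refine ⟨a, ?_⟩
    simp only [hCsdef, mem_setOf_eq]
    rw [← dist_eq_norm, dist_comm]
    exact ha.le
  have hCcl : ∀ n, IsClosed (Cs n) := by
    intro n
    have : Cs n = ⇑(Q ^ n) ⁻¹' (Metric.closedBall x₀ (1/2)) := by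
      ext v
      simp [hCsdef, Metric.mem_closedBall, dist_eq_norm]
    rw [this]
    exact IsClosed.preimage (Q ^ n).continuous Metric.isClosed_closedBall
  have hCconv : ∀ n, Convex ℝ (Cs n) := by
    intro n
    have : Cs n = ⇑((Q ^ n).restrictScalars ℝ) ⁻¹' (Metric.closedBall x₀ (1/2)) := by
      ext v
      simp [hCsdef, Metric.mem_closedBall, dist_eq_norm]
    rw [this]
    exact (convex_closedBall x₀ (1/2)).linear_preimage
      (((Q ^ n).restrictScalars ℝ) : X →ₗ[ℝ] X)
  have hmin : ∀ n, ∃ c ∈ Cs n, ∀ p ∈ Cs n, ‖c‖ ≤ ‖p‖ :=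
    fun n => exists_min_norm_point (hCne n) (hCcl n) (hCconv n)
  choose y hyC hymin using hmin
  set d : ℕ → ℝ := fun n => ‖y n‖ with hddef
  have hdpos : ∀ n, 0 < d n := by
    intro n
    rcases eq_or_lt_of_le (norm_nonneg (y n)) with h | h
    · exfalso
      have hy0 : y n = 0 := by
        rw [← norm_eq_zero]; exact h.symm
      have := hyC n
      rw [hy0] at this
      simp only [hCsdef, mem_setOf_eq, map_zero, zero_sub, norm_neg] at this
      rw [hx₀] at this
      norm_num at this
    · exact h
  -- minimal vectors hit the sphere exactly
  have hxeq : ∀ n, ‖(Q ^ n) (y n) - x₀‖ = 1/2 := by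
    intro n
    have hyC' : ‖(Q ^ n) (y n) - x₀‖ ≤ 1/2 := hyC n
    rcases lt_or_eq_of_le hyC' with hlt | heq
    · exfalso
      set r := ‖(Q ^ n) (y n) - x₀‖ with hrdef
      have hr0 : 0 ≤ r := norm_nonneg _
      have hr1 : r < 1/2 := hlt
      have hrne : (0:ℝ) < 1 - r := by linarith
      set t : ℝ := (1/2) / (1 - r) with htdef
      have ht0 : 0 < t := by positivity
      have ht1 : t < 1 := by
        rw [htdef, div_lt_one hrne]
        linarith
      have hmem : (t:ℂ) • y n ∈ Cs n := by
        simp only [hCsdef, mem_setOf_eq]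
        have h1 : (Q ^ n) ((t:ℂ) • y n) = (t:ℂ) • ((Q ^ n) (y n)) := map_smul _ _ _
        have h2 : (t:ℂ) • ((Q ^ n) (y n)) - x₀
            = (t:ℂ) • ((Q ^ n) (y n) - x₀) + ((t:ℂ) - 1) • x₀ := by
          rw [smul_sub, sub_smul, one_smul]
          abel
        rw [h1, h2]
        have h3 : ‖(t:ℂ) • ((Q ^ n) (y n) - x₀)‖ = t * r := by
          rw [norm_smul, Complex.norm_real, Real.norm_eq_abs, abs_of_pos ht0]
        have h4 : ‖((t:ℂ) - 1) • x₀‖ = 1 - t := by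
          rw [norm_smul, hx₀, mul_one]
          have : (t:ℂ) - 1 = ((t - 1 : ℝ) : ℂ) := by push_cast; ring
          rw [this, Complex.norm_real, Real.norm_eq_abs, abs_of_neg (by linarith)]
          ring
        calc ‖(t:ℂ) • ((Q ^ n) (y n) - x₀) + ((t:ℂ) - 1) • x₀‖
            ≤ ‖(t:ℂ) • ((Q ^ n) (y n) - x₀)‖ + ‖((t:ℂ) - 1) • x₀‖ := norm_add_le _ _
          _ = t * r + (1 - t) := by rw [h3, h4]
          _ = 1 - t * (1 - r) := by ring
          _ = 1/2 := by
              rw [htdef]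
              field_simp
              ring
      have hle := hymin n _ hmem
      have : ‖(t:ℂ) • y n‖ = t * d n := by
        rw [norm_smul, Complex.norm_real, Real.norm_eq_abs, abs_of_pos ht0]
      rw [this] at hle
      nlinarith [hdpos n]
    · exact heq
  have hlow : ∀ n, (1:ℝ)/2 ≤ ‖(Q ^ n) (y n)‖ := by
    intro n
    have h1 := hxeq n
    have h2 : ‖x₀‖ - ‖(Q ^ n) (y n)‖ ≤ ‖(Q ^ n) (y n) - x₀‖ := by
      have := norm_sub_norm_le ((Q ^ n) (y n)) x₀
      have h3 := abs_norm_sub_norm_le ((Q ^ n) (y n)) x₀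
      rw [abs_le] at h3
      linarith [h3.1]
    rw [h1, hx₀] at h2
    linarith
  -- the ratio d n / d (n+1) gets arbitrarily small
  have hratio : ∀ δ : ℝ, 0 < δ → ∀ N : ℕ, ∃ n, N ≤ n ∧ d n < δ * d (n+1) := by
    intro δ hδ N
    by_contra hcon
    push_neg at hcon
    have hstep : ∀ n, N ≤ n → d (n+1) ≤ d n / δ := by
      intro n hn
      have := hcon n hn
      rw [le_div_iff₀ hδ]
      nlinarith
    have hgeo : ∀ k : ℕ, d (N + k) ≤ d N / δ ^ k := by
      intro k
      induction k with
      | zero => simp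
      | succ k ih =>
          have h1 := hstep (N + k) (Nat.le_add_right N k)
          have h2 : d (N + k) / δ ≤ (d N / δ ^ k) / δ := by gcongr
          calc d (N + (k+1)) = d ((N + k) + 1) := by ring_nf
            _ ≤ d (N + k) / δ := h1
            _ ≤ (d N / δ ^ k) / δ := h2
            _ = d N / δ ^ (k+1) := by rw [div_div, pow_succ]
    have hop : ∀ n, (1:ℝ)/2 ≤ ‖Q ^ n‖ * d n := by
      intro n
      calc (1:ℝ)/2 ≤ ‖(Q ^ n) (y n)‖ := hlow n
        _ ≤ ‖Q ^ n‖ * ‖y n‖ := (Q ^ n).le_opNorm _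
    set c' : ℝ := 1 / (2 * d N * δ ^ N) with hc'def
    have hdN := hdpos N
    have hc'pos : 0 < c' := by positivity
    have h1 : ∀ n, N ≤ n → c' * δ ^ n ≤ ‖Q ^ n‖ := by
      intro n hn
      have h3 : (0:ℝ) < δ ^ n := pow_pos hδ n
      have h6 : (0:ℝ) < δ ^ N := pow_pos hδ N
      have hd_n : d n ≤ (d N * δ ^ N) / δ ^ n := by
        have hkey := hgeo (n - N)
        rw [Nat.add_sub_cancel' hn] at hkey
        have hps : δ ^ (n - N) = δ ^ n / δ ^ N := pow_sub₀ δ (ne_of_gt hδ) hn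
        rw [hps] at hkey
        calc d n ≤ d N / (δ ^ n / δ ^ N) := hkey
          _ = (d N * δ ^ N) / δ ^ n := by field_simp
      have h7 : (1:ℝ)/2 ≤ ‖Q ^ n‖ * ((d N * δ ^ N) / δ ^ n) := by
        calc (1:ℝ)/2 ≤ ‖Q ^ n‖ * d n := hop n
          _ ≤ ‖Q ^ n‖ * ((d N * δ ^ N) / δ ^ n) :=
            mul_le_mul_of_nonneg_left hd_n (norm_nonneg _)
      have h8 : (1/2 : ℝ) * (δ ^ n) ≤ ‖Q ^ n‖ * (d N * δ ^ N) := by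
        have hmul := mul_le_mul_of_nonneg_right h7 h3.le
        calc (1/2:ℝ) * δ ^ n ≤ (‖Q ^ n‖ * ((d N * δ ^ N) / δ ^ n)) * δ ^ n := hmul
          _ = ‖Q ^ n‖ * (d N * δ ^ N) := by field_simp
      rw [hc'def, div_mul_eq_mul_div, one_mul, div_le_iff₀ (by positivity)]
      nlinarith [norm_nonneg (Q ^ n)]
    -- rpow lower bound
    have h2 : ∀ n : ℕ, 1 ≤ n → N ≤ n →
        c' ^ ((1:ℝ)/n) * δ ≤ ‖Q ^ n‖ ^ ((1:ℝ)/n) := by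
      intro n hn1 hnN
      have hnR : (0:ℝ) < (n:ℝ) := by exact_mod_cast hn1
      have hbase : (0:ℝ) ≤ c' * δ ^ n := by positivity
      have hrpow := Real.rpow_le_rpow hbase (h1 n hnN) (by positivity : (0:ℝ) ≤ 1/(n:ℝ))
      have heq : (c' * δ ^ n) ^ ((1:ℝ)/n) = c' ^ ((1:ℝ)/n) * δ := by
        rw [Real.mul_rpow hc'pos.le (by positivity)]
        congr 1
        rw [← Real.rpow_natCast δ n, ← Real.rpow_mul hδ.le]
        rw [mul_one_div, div_self (ne_of_gt hnR), Real.rpow_one]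
      rw [heq] at hrpow
      exact hrpow
    -- c' ^ (1/n) → 1
    have h3 : Tendsto (fun n : ℕ => c' ^ ((1:ℝ)/n)) atTop (𝓝 1) := by
      have heq : (fun n : ℕ => c' ^ ((1:ℝ)/n))
          = fun n : ℕ => Real.exp (Real.log c' * (1/n)) := by
        funext n
        rw [Real.rpow_def_of_pos hc'pos]
      rw [heq]
      have hl : Tendsto (fun n : ℕ => Real.log c' * (1/n)) atTop (𝓝 0) := by
        have := tendsto_one_div_atTop_nhds_zero_nat (𝕜 := ℝ)
        have := this.const_mul (Real.log c')
        simpa using this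
      have := (Real.continuous_exp.tendsto 0).comp hl
      simpa [Function.comp_def] using this
    obtain ⟨N2, hN2⟩ := (Metric.tendsto_atTop.1 h3) (1/2) (by norm_num)
    obtain ⟨N1, hN1⟩ := (Metric.tendsto_atTop.1 hquasi) (δ/4) (by positivity)
    set n := max (max N 1) (max N1 N2) with hndef
    have hnN : N ≤ n := le_trans (le_max_left N 1) (le_max_left _ _)
    have hn1 : 1 ≤ n := le_trans (le_max_right N 1) (le_max_left _ _)
    have hnN1 : N1 ≤ n := le_trans (le_max_left N1 N2) (le_max_right _ _)
    have hnN2 : N2 ≤ n := le_trans (le_max_right N1 N2) (le_max_right _ _)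
    have hq := hN1 n hnN1
    have hc := hN2 n hnN2
    rw [Real.dist_eq, sub_zero] at hq
    rw [Real.dist_eq] at hc
    have habs : |‖Q ^ n‖ ^ ((1:ℝ)/n)| = ‖Q ^ n‖ ^ ((1:ℝ)/n) :=
      abs_of_nonneg (Real.rpow_nonneg (norm_nonneg _) _)
    rw [habs] at hq
    have hcl : (1:ℝ)/2 < c' ^ ((1:ℝ)/n) := by
      have := abs_lt.1 hc
      linarith [this.1]
    have hfinal := h2 n hn1 hnN
    nlinarith
  -- build the subsequence with rapidly growing minimal norms
  have hRat : ∀ (j : ℕ) (N : ℕ), ∃ n, N ≤ n ∧ d n < (1/((j:ℝ)+1)) * d (n+1) := by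
    intro j N
    exact hratio (1/((j:ℝ)+1)) (by positivity) N
  choose Fm hFm1 hFm2 using hRat
  set mseq : ℕ → ℕ := fun k => Nat.rec (Fm 0 0) (fun k ih => Fm (k+1) (ih+1)) k with hmseqdef
  have hmsucc : ∀ k, mseq (k+1) = Fm (k+1) (mseq k + 1) := fun k => rfl
  have hmmono : StrictMono mseq := by
    apply strictMono_nat_of_lt_succ
    intro k
    have h1 : mseq k + 1 ≤ mseq (k+1) := by
      rw [hmsucc]
      exact hFm1 (k+1) (mseq k + 1)
    omega
  have hmrat : ∀ k, d (mseq k) < (1/((k:ℝ)+1)) * d (mseq k + 1) := by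
    intro k
    cases k with
    | zero => exact hFm2 0 0
    | succ k =>
        rw [hmsucc]
        exact hFm2 (k+1) (mseq k + 1)
  -- apply weak sequential compactness
  set xseq : ℕ → X := fun k => (Q ^ (mseq k)) (y (mseq k)) with hxseqdef
  have hxb : ∀ k, ‖xseq k‖ ≤ 2 := by
    intro k
    have h1 := hxeq (mseq k)
    have h2 : ‖xseq k‖ ≤ ‖xseq k - x₀‖ + ‖x₀‖ := by
      calc ‖xseq k‖ = ‖(xseq k - x₀) + x₀‖ := by rw [sub_add_cancel]
        _ ≤ ‖xseq k - x₀‖ + ‖x₀‖ := norm_add_le _ _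
    rw [hx₀] at h2
    have h3 : ‖xseq k - x₀‖ = 1/2 := h1
    linarith
  obtain ⟨φ, hφ, z, hweak⟩ := weak_seq_compact xseq 2 hxb
  -- apply property (star)
  obtain ⟨σ, K, hσ, hKcomm, hKb, hwex⟩ := hstar' (fun k => xseq (φ k)) ⟨z, hweak⟩
    (fun k => hxeq (mseq (φ k)))
  obtain ⟨w, hw⟩ := hwex
  set Nk : ℕ → ℕ := fun k => mseq (φ (σ k)) with hNkdef
  -- commutation with powers, pointwise
  have hKQ : ∀ (k : ℕ) (v : X), (K k) (Q v) = Q ((K k) v) := by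
    intro k v
    have := ContinuousLinearMap.ext_iff.1 (hKcomm k) v
    simpa using this
  have hKpow : ∀ (k n : ℕ) (v : X), (K k) ((Q ^ n) v) = (Q ^ n) ((K k) v) := by
    intro k n
    induction n with
    | zero => intro v; simp
    | succ n ih =>
        intro v
        rw [hpow_apply' n v, hKQ k ((Q ^ n) v), ih v, ← hpow_apply' n ((K k) v)]
  -- limit of Q-power images
  have hw' : Tendsto (fun k => (Q ^ (Nk k)) ((K k) (y (Nk k)))) atTop (𝓝 w) := by
    apply hw.congr
    intro k
    exact hKpow k (Nk k) (y (Nk k))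
  -- w is nonzero
  have hterm : ∀ k, (1:ℝ)/4 ≤ ‖(K k) (xseq (φ (σ k)))‖ := by
    intro k
    obtain ⟨hK1, hK2⟩ := hKb k
    have h5 : ‖(K k) x₀ - (K k) (xseq (φ (σ k)))‖ ≤ 1/2 := by
      rw [← map_sub]
      calc ‖(K k) (x₀ - xseq (φ (σ k)))‖ ≤ ‖K k‖ * ‖x₀ - xseq (φ (σ k))‖ :=
            (K k).le_opNorm _
        _ ≤ 1 * (1/2) := by
            apply mul_le_mul hK1 _ (norm_nonneg _) zero_le_one
            rw [norm_sub_rev]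
            exact (hxeq (mseq (φ (σ k)))).le
        _ = 1/2 := one_mul _
    have h6 : ‖(K k) x₀‖ ≤ ‖(K k) x₀ - (K k) (xseq (φ (σ k)))‖ + ‖(K k) (xseq (φ (σ k)))‖ := by
      calc ‖(K k) x₀‖ = ‖((K k) x₀ - (K k) (xseq (φ (σ k)))) + (K k) (xseq (φ (σ k)))‖ := by
            rw [sub_add_cancel]
        _ ≤ _ := norm_add_le _ _
    have h7 : (1 + 1/2)/2 ≤ ‖(K k) x₀‖ := hK2
    linarith
  have hwn : (1:ℝ)/4 ≤ ‖w‖ := by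
    have hnormlim : Tendsto (fun k => ‖(K k) (xseq (φ (σ k)))‖) atTop (𝓝 ‖w‖) := hw.norm
    exact ge_of_tendsto hnormlim (Eventually.of_forall hterm)
  have hw0 : w ≠ 0 := by
    intro h
    rw [h, norm_zero] at hwn
    norm_num at hwn
  have hQw : Q w ≠ 0 := by
    intro h
    exact hw0 (hinj w h)
  -- density of orbit of Q w
  have hx₀mem : x₀ ∈ closure (commOrbit Q (Q w) : Set X) := by
    have h1 := horb (Q w) hQw
    have h2 : x₀ ∈ (commOrbit Q (Q w)).topologicalClosure := by
      rw [h1]; trivial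
    exact h2
  obtain ⟨p, hporb, hpdist⟩ := Metric.mem_closure_iff.1 hx₀mem (1/4) (by norm_num)
  obtain ⟨T, hTcomm, hTp⟩ := hporb
  have hTQ : ∀ v : X, T (Q v) = Q (T v) := by
    intro v
    have := ContinuousLinearMap.ext_iff.1 hTcomm v
    simpa using this
  have hTpow : ∀ (n : ℕ) (v : X), T ((Q ^ n) v) = (Q ^ n) (T v) := by
    intro n
    induction n with
    | zero => intro v; simp
    | succ n ih =>
        intro v
        rw [hpow_apply' n v, hTQ ((Q ^ n) v), ih v, ← hpow_apply' n (T v)]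
  -- eventually T Q (Q^Nk v_k) is close to x₀
  have hTQcont : Continuous fun v : X => T (Q v) := T.continuous.comp Q.continuous
  have hlim2 : Tendsto (fun k => T (Q ((Q ^ (Nk k)) ((K k) (y (Nk k)))))) atTop
      (𝓝 (T (Q w))) := ((hTQcont.tendsto w).comp hw')
  obtain ⟨k₀, hk₀⟩ := Metric.tendsto_atTop.1 hlim2 (1/4) (by norm_num)
  set kk := max k₀ (Nat.ceil ‖T‖) with hkkdef
  have hkk1 : k₀ ≤ kk := le_max_left _ _
  have hkk2 : (‖T‖ : ℝ) ≤ kk := le_trans (Nat.le_ceil _) (by exact_mod_cast le_max_right k₀ _)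
  -- the vector T (K kk (y (Nk kk))) lies in Cs (Nk kk + 1)
  have hmem2 : T ((K kk) (y (Nk kk))) ∈ Cs (Nk kk + 1) := by
    simp only [hCsdef, mem_setOf_eq]
    have he1 : (Q ^ (Nk kk + 1)) (T ((K kk) (y (Nk kk))))
        = T (Q ((Q ^ (Nk kk)) ((K kk) (y (Nk kk))))) := by
      rw [← hTpow (Nk kk + 1), hpow_apply' (Nk kk)]
    rw [he1]
    have h1 := hk₀ kk hkk1
    rw [dist_eq_norm] at h1 hpdist
    rw [← hTp] at hpdist
    calc ‖T (Q ((Q ^ (Nk kk)) ((K kk) (y (Nk kk))))) - x₀‖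
        ≤ ‖T (Q ((Q ^ (Nk kk)) ((K kk) (y (Nk kk))))) - T (Q w)‖ + ‖T (Q w) - x₀‖ := by
          have := norm_add_le (T (Q ((Q ^ (Nk kk)) ((K kk) (y (Nk kk))))) - T (Q w))
            (T (Q w) - x₀)
          simpa using this
      _ ≤ 1/4 + 1/4 := by
          apply add_le_add h1.le
          rw [norm_sub_rev]
          exact hpdist.le
      _ = 1/2 := by norm_num
  -- minimality gives the contradiction
  have hineq1 : d (Nk kk + 1) ≤ ‖T ((K kk) (y (Nk kk)))‖ := hymin (Nk kk + 1) _ hmem2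
  have hineq2 : ‖T ((K kk) (y (Nk kk)))‖ ≤ ‖T‖ * d (Nk kk) := by
    calc ‖T ((K kk) (y (Nk kk)))‖ ≤ ‖T‖ * ‖(K kk) (y (Nk kk))‖ := T.le_opNorm _
      _ ≤ ‖T‖ * d (Nk kk) := by
          apply mul_le_mul_of_nonneg_left _ (norm_nonneg T)
          calc ‖(K kk) (y (Nk kk))‖ ≤ ‖K kk‖ * ‖y (Nk kk)‖ := (K kk).le_opNorm _
            _ ≤ 1 * ‖y (Nk kk)‖ :=
                mul_le_mul_of_nonneg_right (hKb kk).1 (norm_nonneg _)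
            _ = d (Nk kk) := one_mul _
  -- ratio inequality
  set j := φ (σ kk) with hjdef
  have hjk : kk ≤ j := le_trans (hσ.le_apply) (hφ.le_apply)
  have hratj := hmrat j
  have hdj : 0 < d (mseq j) := hdpos _
  have hdj1 : 0 < d (mseq j + 1) := hdpos _
  -- d (Nk kk) = d (mseq j), Nk kk + 1 = mseq j + 1
  have hNkj : Nk kk = mseq j := rfl
  rw [hNkj] at hineq1 hineq2
  -- (j+1) * d (mseq j) < d (mseq j + 1) ≤ ‖T‖ * d (mseq j)
  have hj1 : ((j:ℝ)+1) * d (mseq j) < d (mseq j + 1) := by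
    have h1 : d (mseq j) < (1/((j:ℝ)+1)) * d (mseq j + 1) := hratj
    have h2 : (0:ℝ) < (j:ℝ)+1 := by positivity
    rw [← lt_div_iff₀' h2]
    calc d (mseq j) < (1/((j:ℝ)+1)) * d (mseq j + 1) := h1
      _ = d (mseq j + 1) / ((j:ℝ)+1) := by ring
  have hjR : (kk:ℝ) ≤ (j:ℝ) := by exact_mod_cast hjk
  have hTd : ‖T‖ * d (mseq j) ≤ (j:ℝ) * d (mseq j) :=
    mul_le_mul_of_nonneg_right (le_trans hkk2 hjR) hdj.le
  nlinarith
end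

section
/- Let X be a complex Banach space whose norm is uniformly convex and smooth, and let Q be a bounded linear operator on X with dense range. Then there exists ε ∈ [1/2, 1) with the following property: whenever x₀ ∈ X has ‖x₀‖ = 1, (yₙ) is a sequence of minimal vectors of Q with respect to x₀ and ε, and f is a weak* cluster point of the sequence ((Qⁿyₙ − x₀)*)ₙ of support functionals in X*, then f ≠ 0. -/
open Filter Topology

theorem complex_eq_ofReal_of_re {z : ℂ} {c : ℝ} (h1 : z.re = c) (h2 : ‖z‖ ≤ c) :
    z = (c : ℂ) := by
  have hsq : z.re ^ 2 + z.im ^ 2 = ‖z‖ ^ 2 := by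
    rw [Complex.sq_norm, Complex.normSq_apply]; ring
  have hc : 0 ≤ c := le_trans (norm_nonneg z) h2
  have him : z.im = 0 := by nlinarith [norm_nonneg z]
  apply Complex.ext
  · simpa using h1
  · simpa using him

theorem exists_support_like {X : Type*} [NormedAddCommGroup X] [NormedSpace ℂ X]
    (u v : X) (ε : ℝ) (hε : 0 < ε) (hu : ‖u‖ = ε) (hv : v ≠ 0)
    (hsep : ∀ t : ℝ, 0 < t → t ≤ 1 → ε ≤ ‖u - t • v‖) :
    ∃ F : X →L[ℂ] ℂ, F u = (ε : ℂ) ^ 2 ∧ ‖F‖ = ε ∧ (F v).re ≤ 0 := by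
  classical
  set q : ℝ → X → ℝ := fun t x => (‖u + t • x‖ - ε) / t with hqdef
  have q_le_norm : ∀ t : ℝ, 0 < t → ∀ x, q t x ≤ ‖x‖ := by
    intro t ht x
    have h1 : ‖u + t • x‖ ≤ ε + t * ‖x‖ := by
      have := norm_add_le u (t • x)
      rw [norm_smul, Real.norm_eq_abs, abs_of_pos ht, hu] at this
      exact this
    rw [hqdef]
    rw [div_le_iff₀ ht]
    nlinarith
  have neg_norm_le_q : ∀ t : ℝ, 0 < t → ∀ x, -‖x‖ ≤ q t x := by
    intro t ht x
    have h1 : ε - t * ‖x‖ ≤ ‖u + t • x‖ := by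
      have := norm_add_le (u + t • x) (-(t • x))
      simp only [add_neg_cancel_right, norm_neg] at this
      rw [norm_smul, Real.norm_eq_abs, abs_of_pos ht, hu] at this
      linarith
    rw [hqdef]
    rw [le_div_iff₀ ht]
    nlinarith
  have q_mono : ∀ s t : ℝ, 0 < s → s ≤ t → ∀ x, q s x ≤ q t x := by
    intro s t hs hst x
    have ht : 0 < t := lt_of_lt_of_le hs hst
    have h1 : t • (u + s • x) = (t - s) • u + s • (u + t • x) := by module
    have h2 : t * ‖u + s • x‖ ≤ (t - s) * ε + s * ‖u + t • x‖ := by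
      calc t * ‖u + s • x‖ = ‖t • (u + s • x)‖ := by
            rw [norm_smul, Real.norm_eq_abs, abs_of_pos ht]
        _ = ‖(t - s) • u + s • (u + t • x)‖ := by rw [h1]
        _ ≤ ‖(t - s) • u‖ + ‖s • (u + t • x)‖ := norm_add_le _ _
        _ = (t - s) * ε + s * ‖u + t • x‖ := by
            rw [norm_smul, norm_smul, Real.norm_eq_abs, Real.norm_eq_abs,
              abs_of_nonneg (by linarith : (0:ℝ) ≤ t - s), abs_of_pos hs, hu]
    rw [hqdef]
    rw [div_le_div_iff₀ hs ht]
    nlinarith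
  set S : X → Set ℝ := fun x => (fun t => q t x) '' Set.Ioi 0 with hSdef
  have hSne : ∀ x, (S x).Nonempty := fun x => ⟨q 1 x, 1, by norm_num, rfl⟩
  have hSbdd : ∀ x, BddBelow (S x) := by
    intro x
    refine ⟨-‖x‖, ?_⟩
    rintro _ ⟨t, ht, rfl⟩
    exact neg_norm_le_q t ht x
  set p : X → ℝ := fun x => sInf (S x) with hpdef
  have p_le : ∀ x, ∀ t : ℝ, 0 < t → p x ≤ q t x := by
    intro x t ht
    exact csInf_le (hSbdd x) ⟨t, ht, rfl⟩
  have le_p : ∀ x, ∀ c : ℝ, (∀ t : ℝ, 0 < t → c ≤ q t x) → c ≤ p x := by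
    intro x c h
    exact le_csInf (hSne x) (by rintro _ ⟨t, ht, rfl⟩; exact h t ht)
  have p_le_norm : ∀ x, p x ≤ ‖x‖ := fun x => (p_le x 1 one_pos).trans (q_le_norm 1 one_pos x)
  -- subadditivity
  have q_subadd : ∀ t : ℝ, 0 < t → ∀ x x', q (t/2) (x + x') ≤ q t x + q t x' := by
    intro t ht x x'
    have h1 : (2:ℝ) • (u + (t/2) • (x + x')) = (u + t • x) + (u + t • x') := by module
    have h2 : 2 * ‖u + (t/2) • (x + x')‖ ≤ ‖u + t • x‖ + ‖u + t • x'‖ := by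
      calc 2 * ‖u + (t/2) • (x + x')‖ = ‖(2:ℝ) • (u + (t/2) • (x + x'))‖ := by
            rw [norm_smul]; norm_num
        _ = ‖(u + t • x) + (u + t • x')‖ := by rw [h1]
        _ ≤ _ := norm_add_le _ _
    show (‖u + (t/2) • (x + x')‖ - ε) / (t/2) ≤ (‖u + t • x‖ - ε) / t + (‖u + t • x'‖ - ε) / t
    rw [← add_div, div_le_div_iff₀ (by linarith) ht]
    nlinarith
  have p_add : ∀ x x', p (x + x') ≤ p x + p x' := by
    intro x x'
    refine le_of_forall_pos_le_add ?_
    intro δ hδ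
    obtain ⟨a, ⟨t₁, ht₁, rfl⟩, ha⟩ := exists_lt_of_csInf_lt (hSne x) (by linarith [p_le x 1 one_pos] : sInf (S x) < p x + δ/2)
    obtain ⟨b, ⟨t₂, ht₂, rfl⟩, hb⟩ := exists_lt_of_csInf_lt (hSne x') (by linarith [p_le x' 1 one_pos] : sInf (S x') < p x' + δ/2)
    set t := min t₁ t₂ with htdef
    have htpos : 0 < t := lt_min ht₁ ht₂
    have h1 : q t x ≤ q t₁ x := q_mono t t₁ htpos (min_le_left _ _) x
    have h2 : q t x' ≤ q t₂ x' := q_mono t t₂ htpos (min_le_right _ _) x'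
    have h3 : p (x + x') ≤ q (t/2) (x + x') := p_le _ _ (by linarith)
    have h4 := q_subadd t htpos x x'
    have ha' : q t₁ x < p x + δ/2 := ha
    have hb' : q t₂ x' < p x' + δ/2 := hb
    linarith
  have p_zero : p 0 = 0 := by
    have h1 : p 0 ≤ q 1 0 := p_le 0 1 one_pos
    have h2 : q 1 0 = 0 := by simp [hqdef, hu]
    have h3 : (0:ℝ) ≤ p 0 := le_p 0 0 (by intro t ht; simp [hqdef, hu, le_div_iff₀ ht])
    linarith [h1, h2.le, h2.ge]
  have p_smul_le : ∀ c : ℝ, 0 < c → ∀ x, p (c • x) ≤ c * p x := by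
    intro c hc x
    have key : ∀ s : ℝ, 0 < s → p (c • x) ≤ c * q s x := by
      intro s hs
      have h1 : q (s / c) (c • x) = c * q s x := by
        rw [hqdef]
        have : (s / c) • (c • x) = s • x := by
          rw [smul_smul, div_mul_cancel₀ _ (ne_of_gt hc)]
        simp only [this]
        field_simp
      calc p (c • x) ≤ q (s / c) (c • x) := p_le _ _ (div_pos hs hc)
        _ = c * q s x := h1
    have h2 : p (c • x) / c ≤ p x := by
      refine le_p x _ ?_
      intro t ht
      rw [div_le_iff₀ hc]
      calc p (c • x) ≤ c * q t x := key t ht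
        _ = q t x * c := mul_comm _ _
    calc p (c • x) = (p (c • x) / c) * c := by field_simp
      _ ≤ p x * c := mul_le_mul_of_nonneg_right h2 hc.le
      _ = c * p x := mul_comm _ _
  have p_smul : ∀ c : ℝ, 0 < c → ∀ x, p (c • x) = c * p x := by
    intro c hc x
    refine le_antisymm (p_smul_le c hc x) ?_
    have h1 : p (c⁻¹ • (c • x)) ≤ c⁻¹ * p (c • x) := p_smul_le c⁻¹ (inv_pos.2 hc) (c • x)
    rw [smul_smul, inv_mul_cancel₀ (ne_of_gt hc), one_smul] at h1
    calc c * p x ≤ c * (c⁻¹ * p (c • x)) := mul_le_mul_of_nonneg_left h1 hc.le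
      _ = p (c • x) := by field_simp
  -- values of p
  have p_u : p u ≤ ε := by
    have : q 1 u = ε := by
      show (‖u + (1:ℝ) • u‖ - ε) / 1 = ε
      have h : u + (1:ℝ) • u = (2:ℝ) • u := by module
      rw [h, norm_smul, hu]
      norm_num
      ring
    linarith [p_le u 1 one_pos, this.le]
  have p_negu : p (-u) ≤ -ε := by
    have : q (1/2) (-u) = -ε := by
      show (‖u + (1/2:ℝ) • (-u)‖ - ε) / (1/2) = -ε
      have h : u + (1/2 : ℝ) • (-u) = (1/2 : ℝ) • u := by module
      rw [h, norm_smul, hu]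
      norm_num
      ring
    linarith [p_le (-u) (1/2) (by norm_num), this.le]
  have p_negv : 0 ≤ p (-v) := by
    have hall : ∀ t : ℝ, 0 < t → (0:ℝ) ≤ q t (-v) := by
      intro t ht
      rcases le_or_gt t 1 with h | h
      · have hs := hsep t ht h
        show (0:ℝ) ≤ (‖u + t • (-v)‖ - ε) / t
        have he : u + t • (-v) = u - t • v := by module
        rw [he, le_div_iff₀ ht]
        nlinarith
      · have h1 := q_mono 1 t one_pos h.le (-v)
        have := hsep 1 one_pos le_rfl
        have h2 : (0:ℝ) ≤ q 1 (-v) := by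
          show (0:ℝ) ≤ (‖u + (1:ℝ) • (-v)‖ - ε) / 1
          have he : u + (1:ℝ) • (-v) = u - (1:ℝ) • v := by module
          rw [he, div_one]
          have h3 := hsep 1 one_pos le_rfl
          rw [one_smul] at h3 ⊢
          linarith
        linarith
    exact le_p (-v) 0 hall
  -- Hahn-Banach
  have hnegv : (-v) ≠ 0 := neg_ne_zero.2 hv
  set f₀ : X →ₗ.[ℝ] ℝ := LinearPMap.mkSpanSingleton (-v) (p (-v)) hnegv with hf₀def
  have hf₀dom : f₀.domain = (ℝ ∙ (-v)) := rfl
  have hf₀le : ∀ x : f₀.domain, f₀ x ≤ p x := by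
    rintro ⟨x, hx⟩
    obtain ⟨c, hc⟩ := Submodule.mem_span_singleton.1 hx
    subst hc
    have happ : f₀ ⟨c • (-v), hx⟩ = c • p (-v) :=
      LinearPMap.mkSpanSingleton'_apply _ _ _ c _
    rw [happ]
    rcases lt_trichotomy c 0 with hc0 | hc0 | hc0
    · have h1 : p (c • (-v)) = (-c) * p v := by
        have : c • (-v) = (-c) • v := by module
        rw [this, p_smul (-c) (by linarith) v]
      rw [h1]
      have h2 : 0 ≤ p v + p (-v) := by
        have := p_add v (-v)
        simp only [add_neg_cancel] at this
        rw [p_zero] at this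
        linarith
      have : c • p (-v) = c * p (-v) := rfl
      rw [this]
      nlinarith
    · subst hc0
      simp [p_zero]
    · have h1 : p (c • (-v)) = c * p (-v) := p_smul c hc0 (-v)
      rw [h1]
      exact le_of_eq rfl
  obtain ⟨g, hg_eq, hg_le⟩ := exists_extension_of_le_sublinear f₀ p p_smul p_add hf₀le
  have hg_negv : g (-v) = p (-v) := by
    have hm : -v ∈ f₀.domain := by
      rw [hf₀dom]; exact Submodule.mem_span_singleton_self _
    have := hg_eq ⟨-v, hm⟩
    rw [this]
    exact LinearPMap.mkSpanSingleton_apply ℝ ℝ hnegv (p (-v))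
  have hg_norm : ∀ x, |g x| ≤ ‖x‖ := by
    intro x
    rw [abs_le]
    constructor
    · have := (hg_le (-x)).trans (p_le_norm (-x))
      rw [map_neg, norm_neg] at this
      linarith
    · exact (hg_le x).trans (p_le_norm x)
  have hg_u : g u = ε := by
    have h1 : g u ≤ ε := (hg_le u).trans p_u
    have h2 : g (-u) ≤ -ε := (hg_le (-u)).trans p_negu
    rw [map_neg] at h2
    linarith
  have hg_v : g v ≤ 0 := by
    have : g (-v) = -g v := map_neg g v
    rw [this] at hg_negv
    linarith
  set G : X →L[ℝ] ℝ := LinearMap.mkContinuous g 1 (by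
    intro x
    rw [one_mul, Real.norm_eq_abs]
    exact hg_norm x) with hGdef
  have hG_apply : ∀ x, G x = g x := fun x => rfl
  have hG_norm : ‖G‖ ≤ 1 := LinearMap.mkContinuous_norm_le _ zero_le_one _
  set F₁ : X →L[ℂ] ℂ := StrongDual.extendRCLike G with hF₁def
  have hF₁_norm : ‖F₁‖ ≤ 1 := by
    rw [hF₁def, ContinuousLinearMap.norm_extendTo𝕜']
    exact hG_norm
  have hF₁_re : ∀ x, (F₁ x).re = g x := by
    intro x
    rw [hF₁def, ContinuousLinearMap.extendTo𝕜'_apply]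
    simp [Complex.sub_re, Complex.mul_re, hG_apply]
  have hF₁u : F₁ u = (ε : ℂ) := by
    have h1 : (F₁ u).re = ε := by rw [hF₁_re]; exact hg_u
    have h2 : ‖F₁ u‖ ≤ ε := by
      calc ‖F₁ u‖ ≤ ‖F₁‖ * ‖u‖ := F₁.le_opNorm u
        _ ≤ 1 * ε := by rw [hu]; exact mul_le_mul_of_nonneg_right hF₁_norm hε.le
        _ = ε := one_mul ε
    exact complex_eq_ofReal_of_re h1 h2
  refine ⟨(ε : ℂ) • F₁, ?_, ?_, ?_⟩
  · rw [ContinuousLinearMap.smul_apply, hF₁u, smul_eq_mul]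
    ring
  · have hFnorm : ‖(ε : ℂ) • F₁‖ = ε * ‖F₁‖ := by
      rw [norm_smul (ε : ℂ) F₁]
      congr 1
      simpa using abs_of_pos hε
    have hFu : ((ε : ℂ) • F₁) u = (ε : ℂ) ^ 2 := by
      rw [ContinuousLinearMap.smul_apply, hF₁u, smul_eq_mul]; ring
    have h2 : ‖(ε : ℂ) • F₁‖ ≤ ε := by
      rw [hFnorm]
      calc ε * ‖F₁‖ ≤ ε * 1 := mul_le_mul_of_nonneg_left hF₁_norm hε.le
        _ = ε := mul_one ε
    have h3 : ε ≤ ‖(ε : ℂ) • F₁‖ := by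
      have h := ((ε : ℂ) • F₁).le_opNorm u
      rw [hFu, hu] at h
      have hnorm : ‖(ε : ℂ) ^ 2‖ = ε ^ 2 := by
        rw [norm_pow, Complex.norm_real, Real.norm_eq_abs, abs_of_pos hε]
      rw [hnorm] at h
      have h' : ε * ε ≤ ‖(ε : ℂ) • F₁‖ * ε := by rw [← pow_two]; exact h
      exact le_of_mul_le_mul_right h' hε
    linarith
  · rw [ContinuousLinearMap.smul_apply, smul_eq_mul]
    have hre : ((ε : ℂ) * F₁ v).re = ε * (F₁ v).re := by
      simp [Complex.mul_re]
    rw [hre, hF₁_re]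
    exact mul_nonpos_of_nonneg_of_nonpos hε.le hg_v

/-- Lemma 2.3: on a uniformly convex and smooth complex Banach space, for an operator
with dense range there is ε ∈ [1/2, 1) such that every weak* cluster point of the
support functionals (Qⁿyₙ − x₀)* of a sequence of minimal vectors is nonzero. -/
theorem weakStar_clusterPt_of_minimal_vectors_ne_zero
    {X : Type*} [NormedAddCommGroup X] [NormedSpace ℂ X] [CompleteSpace X]
    [UniformConvexSpace X]
    (sf : X → (X →L[ℂ] ℂ))
    (hsf : ∀ x : X, x ≠ 0 → (sf x) x = (‖x‖ : ℂ) ^ 2 ∧ ‖sf x‖ = ‖x‖ ∧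
      ∀ f : X →L[ℂ] ℂ, f x = (‖x‖ : ℂ) ^ 2 → ‖f‖ = ‖x‖ → f = sf x)
    (Q : X →L[ℂ] X) (hdense : DenseRange Q) :
    ∃ ε : ℝ, 1 / 2 ≤ ε ∧ ε < 1 ∧
      ∀ x₀ : X, ‖x₀‖ = 1 →
      ∀ y : ℕ → X,
        (∀ n : ℕ, ‖(Q ^ n) (y n) - x₀‖ ≤ ε ∧
          ∀ z : X, ‖(Q ^ n) z - x₀‖ ≤ ε → ‖y n‖ ≤ ‖z‖) →
        ∀ f : X →L[ℂ] ℂ,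
          MapClusterPt (StrongDual.toWeakDual f) atTop
            (fun n : ℕ => StrongDual.toWeakDual (sf ((Q ^ n) (y n) - x₀))) →
          f ≠ 0 := by
  refine ⟨1/2, le_refl _, by norm_num, ?_⟩
  intro x₀ hx₀ y hy f hf
  have key : ∀ n : ℕ, ((sf ((Q ^ n) (y n) - x₀)) x₀).re ≤ -(1/4 : ℝ) := by
    intro n
    obtain ⟨hle, hmin⟩ := hy n
    set u : X := (Q ^ n) (y n) - x₀ with hudef
    set v : X := (Q ^ n) (y n) with hvdef
    have hyn : y n ≠ 0 := by
      intro h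
      have h2 : ‖(Q ^ n) (y n) - x₀‖ ≤ 1/2 := hle
      rw [h] at h2
      simp only [map_zero, zero_sub, norm_neg, hx₀] at h2
      norm_num at h2
    have hyn' : 0 < ‖y n‖ := norm_pos_iff.2 hyn
    have hv0 : v ≠ 0 := by
      intro h
      have h2 : ‖v - x₀‖ ≤ 1/2 := hle
      rw [h] at h2
      simp only [zero_sub, norm_neg, hx₀] at h2
      norm_num at h2
    have hmin' : ∀ t : ℝ, 0 < t → t ≤ 1 → ¬ (‖u - t • v‖ ≤ 1/2) := by
      intro t ht ht1 hcon
      have hQz : (Q ^ n) ((1 - t) • y n) = (1 - t) • v := by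
        rw [hvdef]
        exact ContinuousLinearMap.map_smul_of_tower _ _ _
      have hz : ‖(Q ^ n) ((1 - t) • y n) - x₀‖ ≤ 1/2 := by
        rw [hQz]
        have he : (1 - t) • v - x₀ = u - t • v := by
          rw [hudef]; module
        rw [he]
        exact hcon
      have hm := hmin _ hz
      rw [norm_smul, Real.norm_eq_abs, abs_of_nonneg (by linarith : (0:ℝ) ≤ 1 - t)] at hm
      nlinarith
    have hsep : ∀ t : ℝ, 0 < t → t ≤ 1 → (1/2 : ℝ) ≤ ‖u - t • v‖ := by
      intro t ht ht1
      by_contra hcon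
      push_neg at hcon
      exact hmin' t ht ht1 hcon.le
    have hnorm_u : ‖u‖ = 1/2 := by
      rcases lt_or_eq_of_le hle with h | h
      · exfalso
        set t : ℝ := min (1/2 : ℝ) ((1/2 - ‖u‖) / (‖v‖ + 1)) with htdef
        have hv1 : (0:ℝ) < ‖v‖ + 1 := by positivity
        have htpos : 0 < t := lt_min (by norm_num) (div_pos (by linarith) hv1)
        have ht1 : t ≤ 1 := le_trans (min_le_left _ _) (by norm_num)
        have htv : t * ‖v‖ < 1/2 - ‖u‖ := by
          have h1 : t ≤ (1/2 - ‖u‖) / (‖v‖ + 1) := min_le_right _ _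
          have h2 : t * ‖v‖ ≤ (1/2 - ‖u‖) / (‖v‖ + 1) * ‖v‖ :=
            mul_le_mul_of_nonneg_right h1 (norm_nonneg v)
          have h3 : (1/2 - ‖u‖) / (‖v‖ + 1) * ‖v‖ < 1/2 - ‖u‖ := by
            rw [div_mul_eq_mul_div, div_lt_iff₀ hv1]
            nlinarith [norm_nonneg v]
          linarith
        refine hmin' t htpos ht1 ?_
        calc ‖u - t • v‖ ≤ ‖u‖ + ‖t • v‖ := norm_sub_le _ _
          _ = ‖u‖ + t * ‖v‖ := by
              rw [norm_smul, Real.norm_eq_abs, abs_of_pos htpos]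
          _ ≤ 1/2 := by linarith
      · exact h
    obtain ⟨F, hFu, hFnorm, hFv⟩ :=
      exists_support_like u v (1/2) (by norm_num) hnorm_u hv0 hsep
    have hu0 : u ≠ 0 := by
      intro h
      rw [h, norm_zero] at hnorm_u
      norm_num at hnorm_u
    obtain ⟨hs1, _, huniq⟩ := hsf u hu0
    have hF_eq : F = sf u := by
      refine huniq F ?_ ?_
      · rw [hnorm_u]; exact_mod_cast hFu
      · rw [hnorm_u]; exact hFnorm
    have hx : x₀ = v - u := by rw [hudef]; abel
    have hre_u : ((sf u) u).re = 1/4 := by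
      rw [hs1, hnorm_u]
      norm_num
    have hre_v : ((sf u) v).re ≤ 0 := by rw [← hF_eq]; exact hFv
    calc ((sf u) x₀).re = ((sf u) v - (sf u) u).re := by rw [hx, map_sub]
      _ = ((sf u) v).re - ((sf u) u).re := Complex.sub_re _ _
      _ ≤ 0 - 1/4 := by rw [hre_u]; linarith
      _ = -(1/4 : ℝ) := by norm_num
  -- cluster point argument
  have hcont : Continuous fun g : WeakDual ℂ X => (g x₀).re :=
    Complex.continuous_re.comp (WeakDual.eval_continuous x₀)
  have hclus := MapClusterPt.continuousAt_comp hcont.continuousAt hf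
  have hmemS : ∀ n : ℕ,
      ((fun g : WeakDual ℂ X => (g x₀).re) ∘
        fun n : ℕ => StrongDual.toWeakDual (sf ((Q ^ n) (y n) - x₀))) n ∈
        Set.Iic (-(1/4 : ℝ)) := by
    intro n
    exact key n
  have hle : ((StrongDual.toWeakDual f) x₀).re ≤ -(1/4 : ℝ) := by
    have h1 : ClusterPt ((StrongDual.toWeakDual f) x₀).re
        (Filter.map ((fun g : WeakDual ℂ X => (g x₀).re) ∘
          fun n : ℕ => StrongDual.toWeakDual (sf ((Q ^ n) (y n) - x₀))) atTop) :=
      hclus.clusterPt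
    have h2 : (Filter.map ((fun g : WeakDual ℂ X => (g x₀).re) ∘
          fun n : ℕ => StrongDual.toWeakDual (sf ((Q ^ n) (y n) - x₀))) atTop) ≤
        Filter.principal (Set.Iic (-(1/4 : ℝ))) := by
      rw [Filter.le_principal_iff, Filter.mem_map]
      exact Filter.univ_mem' hmemS
    have h3 := h1.mono h2
    have h4 := mem_closure_iff_clusterPt.2 h3
    rwa [IsClosed.closure_eq isClosed_Iic] at h4
  intro h0
  rw [h0] at hle
  have hz : ((StrongDual.toWeakDual (0 : X →L[ℂ] ℂ)) x₀) = 0 := by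
    rw [map_zero]; rfl
  rw [hz] at hle
  norm_num at hle
end

section
/- Let X be a complex Banach space, let Q be a quasi-nilpotent bounded linear operator on X with dense range (i.e., ‖Qⁿ‖^(1/n) → 0), let x₀ ∈ X with ‖x₀‖ = 1, let ε ∈ (0,1), and let (yₙ)ₙ be a sequence of minimal vectors of Q with respect to x₀ and ε. Then there exists a strictly increasing sequence (n_k) of natural numbers such that ‖y_{n_k − 1}‖ / ‖y_{n_k}‖ → 0 as k → ∞. -/
open Filter Topology

/-- Lemma 2.4: for a quasi-nilpotent operator with dense range, the norms of a
sequence of minimal vectors have a subsequence along which consecutive ratios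
tend to zero. -/
theorem exists_subseq_ratio_tendsto_zero
    {X : Type*} [NormedAddCommGroup X] [NormedSpace ℂ X]
    (Q : X →L[ℂ] X) (hdense : DenseRange Q)
    (hquasi : Tendsto (fun n : ℕ => ‖Q ^ n‖ ^ ((1 : ℝ) / n)) atTop (𝓝 0))
    (x₀ : X) (hx₀ : ‖x₀‖ = 1) (ε : ℝ) (hε0 : 0 < ε) (hε1 : ε < 1)
    (y : ℕ → X)
    (hy : ∀ n : ℕ, ‖(Q ^ n) (y n) - x₀‖ ≤ ε ∧
      ∀ z : X, ‖(Q ^ n) z - x₀‖ ≤ ε → ‖y n‖ ≤ ‖z‖) :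
    ∃ n : ℕ → ℕ, StrictMono n ∧ (∀ k, 1 ≤ n k) ∧
      Tendsto (fun k => ‖y (n k - 1)‖ / ‖y (n k)‖) atTop (𝓝 0) := by
  have hypos : ∀ n, 0 < ‖y n‖ := by
    intro n
    rcases eq_or_ne (y n) 0 with h | h
    · exfalso
      have h1 := (hy n).1
      rw [h, map_zero, zero_sub, norm_neg, hx₀] at h1
      linarith
    · exact norm_pos_iff.mpr h
  have hlb : ∀ n, 1 - ε ≤ ‖Q ^ n‖ * ‖y n‖ := by
    intro n
    have h1 : ‖x₀‖ - ‖(Q ^ n) (y n)‖ ≤ ‖x₀ - (Q ^ n) (y n)‖ :=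
      norm_sub_norm_le _ _
    rw [norm_sub_rev, hx₀] at h1
    have h2 := (hy n).1
    have h3 : ‖(Q ^ n) (y n)‖ ≤ ‖Q ^ n‖ * ‖y n‖ := (Q ^ n).le_opNorm (y n)
    linarith
  -- Key claim: ratios are frequently small
  have key : ∀ δ : ℝ, 0 < δ → ∀ N : ℕ, ∃ n, N ≤ n ∧ 1 ≤ n ∧
      ‖y (n - 1)‖ / ‖y n‖ < δ := by
    intro δ hδ N
    by_contra hcon
    push_neg at hcon
    set M := max N 1 with hMdef
    have hstep : ∀ m : ℕ, δ ^ m * ‖y (M + m)‖ ≤ ‖y M‖ := by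
      intro m
      induction m with
      | zero => simp
      | succ m ih =>
        have h1 : δ ≤ ‖y (M + m + 1 - 1)‖ / ‖y (M + m + 1)‖ :=
          hcon (M + m + 1) (by omega) (by omega)
        have h1' : δ ≤ ‖y (M + m)‖ / ‖y (M + m + 1)‖ := by
          simpa using h1
        have h2 : δ * ‖y (M + m + 1)‖ ≤ ‖y (M + m)‖ :=
          (le_div_iff₀ (hypos (M + m + 1))).mp h1'
        have h3 : M + (m + 1) = M + m + 1 := by omega
        rw [h3]
        calc δ ^ (m + 1) * ‖y (M + m + 1)‖
            = δ ^ m * (δ * ‖y (M + m + 1)‖) := by ring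
          _ ≤ δ ^ m * ‖y (M + m)‖ :=
              mul_le_mul_of_nonneg_left h2 (pow_nonneg hδ.le m)
          _ ≤ ‖y M‖ := ih
    -- quasi-nilpotence: eventually ‖Q^n‖ ≤ (δ/2)^n
    have hev : ∀ᶠ n : ℕ in atTop, ‖Q ^ n‖ ^ ((1 : ℝ) / n) < δ / 2 :=
      hquasi.eventually_lt_const (half_pos hδ)
    obtain ⟨M2, hM2⟩ := eventually_atTop.mp hev
    have hQn : ∀ n, M2 ≤ n → 1 ≤ n → ‖Q ^ n‖ ≤ (δ / 2) ^ n := by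
      intro n h1 h2
      have h3 : ‖Q ^ n‖ ^ ((1 : ℝ) / n) < δ / 2 := hM2 n h1
      have h4 : (‖Q ^ n‖ ^ ((1 : ℝ) / n)) ^ n ≤ (δ / 2) ^ n :=
        pow_le_pow_left₀ (Real.rpow_nonneg (norm_nonneg _) _) h3.le n
      have hn0 : (n : ℝ) ≠ 0 := Nat.cast_ne_zero.mpr (by omega)
      rwa [← Real.rpow_natCast (‖Q ^ n‖ ^ ((1 : ℝ) / n)) n,
        ← Real.rpow_mul (norm_nonneg _), one_div,
        inv_mul_cancel₀ hn0, Real.rpow_one] at h4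
    -- combine for a contradiction
    have hfinal : ∀ m : ℕ, M2 ≤ m →
        1 - ε ≤ (δ ^ M * ‖y M‖) * (1 / 2) ^ m := by
      intro m hm
      have hQ := hQn (M + m) (by omega) (by omega)
      have hA := hlb (M + m)
      have hB : ‖Q ^ (M + m)‖ * ‖y (M + m)‖ ≤ (δ / 2) ^ (M + m) * ‖y (M + m)‖ :=
        mul_le_mul_of_nonneg_right hQ (norm_nonneg _)
      have hst := hstep m
      -- 1 - ε ≤ (δ/2)^(M+m) * ‖y (M+m)‖
      have hC : 1 - ε ≤ (δ / 2) ^ (M + m) * ‖y (M + m)‖ := le_trans hA hB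
      have hδm : (0:ℝ) < δ ^ m := pow_pos hδ m
      -- multiply hC by δ^m and use hst
      have hD : (1 - ε) * δ ^ m ≤ (δ / 2) ^ (M + m) * ‖y M‖ := by
        calc (1 - ε) * δ ^ m ≤ ((δ / 2) ^ (M + m) * ‖y (M + m)‖) * δ ^ m :=
              mul_le_mul_of_nonneg_right hC hδm.le
          _ = (δ / 2) ^ (M + m) * (δ ^ m * ‖y (M + m)‖) := by ring
          _ ≤ (δ / 2) ^ (M + m) * ‖y M‖ :=
              mul_le_mul_of_nonneg_left hst (by positivity)
      have hE : (δ / 2) ^ (M + m) * ‖y M‖ = (δ ^ M * ‖y M‖) * (1 / 2) ^ (M + m) * δ ^ m := by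
        rw [div_pow, pow_add, div_pow, one_pow]
        ring
      rw [hE] at hD
      have hF : 1 - ε ≤ (δ ^ M * ‖y M‖) * (1 / 2) ^ (M + m) := by
        have := (mul_le_mul_iff_of_pos_right hδm).mp hD
        linarith
      have hG : ((1:ℝ) / 2) ^ (M + m) ≤ (1 / 2) ^ m :=
        pow_le_pow_of_le_one (by norm_num) (by norm_num) (by omega)
      have hCpos : (0:ℝ) ≤ δ ^ M * ‖y M‖ := by positivity
      calc 1 - ε ≤ (δ ^ M * ‖y M‖) * (1 / 2) ^ (M + m) := hF
        _ ≤ (δ ^ M * ‖y M‖) * (1 / 2) ^ m :=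
            mul_le_mul_of_nonneg_left hG hCpos
    -- but RHS tends to 0
    have htend : Tendsto (fun m : ℕ => (δ ^ M * ‖y M‖) * (1 / 2) ^ m) atTop (𝓝 0) := by
      have h12 : Tendsto (fun m : ℕ => ((1:ℝ) / 2) ^ m) atTop (𝓝 0) :=
        tendsto_pow_atTop_nhds_zero_of_lt_one (by norm_num) (by norm_num)
      simpa using h12.const_mul (δ ^ M * ‖y M‖)
    have hlt : ∀ᶠ m : ℕ in atTop, (δ ^ M * ‖y M‖) * (1 / 2) ^ m < 1 - ε :=
      htend.eventually_lt_const (by linarith)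
    obtain ⟨a, ha⟩ := eventually_atTop.mp hlt
    exact absurd (hfinal (max a M2) (le_max_right a M2))
      (not_le.mpr (ha (max a M2) (le_max_left a M2)))
  -- extract subsequence
  have hfreq : ∀ k : ℕ, ∃ᶠ n in atTop,
      1 ≤ n ∧ ‖y (n - 1)‖ / ‖y n‖ < 1 / (k + 1) := by
    intro k
    rw [frequently_atTop]
    intro N
    obtain ⟨n, hnN, hn1, hr⟩ := key (1 / (k + 1)) (by positivity) N
    exact ⟨n, hnN, hn1, hr⟩
  obtain ⟨φ, hφ, hP⟩ := Filter.extraction_forall_of_frequently hfreq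
  refine ⟨φ, hφ, fun k => (hP k).1, ?_⟩
  apply squeeze_zero (fun k => div_nonneg (norm_nonneg _) (norm_nonneg _))
    (fun k => (hP k).2.le)
  exact tendsto_one_div_add_atTop_nhds_zero_nat
end

section
/- Let X be a smooth complex Banach space, let Q be a bounded linear operator on X with dense range, let x₀ ∈ X with ‖x₀‖ = 1, let ε ∈ (0,1), and let (yₙ)ₙ be a sequence of minimal vectors of Q with respect to x₀ and ε. Then for every n ∈ ℕ, the kernel of the support functional (yₙ)* is contained in the kernel of the functional x ↦ (Qⁿyₙ − x₀)*(Qⁿx); that is, ker((yₙ)*) ⊆ ker((Qⁿ)*(Qⁿyₙ − x₀)*). -/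
open Filter Topology

lemma eq_ofReal_of_norm_le_re {c : ℂ} (h : ‖c‖ ≤ c.re) : c = (c.re : ℂ) := by
  have h1 : c.re ≤ ‖c‖ := by
    simpa using Complex.re_le_norm c
  have habs : ‖c‖ = c.re := by
    exact le_antisymm h h1
  have hsq := Complex.sq_norm c
  rw [Complex.normSq_apply, habs] at hsq
  have him : c.im = 0 := by nlinarith
  apply Complex.ext <;> simp [him]

set_option maxHeartbeats 1000000 in
/-- Lemma 2.5: for minimal vectors yₙ of Q with respect to x₀ and ε on a smooth space,
ker((yₙ)*) ⊆ ker((Qⁿ)*(Qⁿyₙ − x₀)*). -/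
theorem ker_support_functional_subset
    {X : Type*} [NormedAddCommGroup X] [NormedSpace ℂ X]
    (sf : X → (X →L[ℂ] ℂ))
    (hsf : ∀ x : X, x ≠ 0 → (sf x) x = (‖x‖ : ℂ) ^ 2 ∧ ‖sf x‖ = ‖x‖ ∧
      ∀ f : X →L[ℂ] ℂ, f x = (‖x‖ : ℂ) ^ 2 → ‖f‖ = ‖x‖ → f = sf x)
    (Q : X →L[ℂ] X) (hdense : DenseRange Q)
    (x₀ : X) (hx₀ : ‖x₀‖ = 1) (ε : ℝ) (hε0 : 0 < ε) (hε1 : ε < 1)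
    (y : ℕ → X)
    (hy : ∀ n : ℕ, ‖(Q ^ n) (y n) - x₀‖ ≤ ε ∧
      ∀ z : X, ‖(Q ^ n) z - x₀‖ ≤ ε → ‖y n‖ ≤ ‖z‖) :
    ∀ n : ℕ, ∀ x : X, sf (y n) x = 0 → sf ((Q ^ n) (y n) - x₀) ((Q ^ n) x) = 0 := by
  intro n
  have hyn := hy n
  set T : X →L[ℂ] X := Q ^ n with hT
  set u : X := y n with hu'
  -- u ≠ 0
  have hu : u ≠ 0 := by
    intro h
    have h1 := hyn.1
    rw [h, map_zero, zero_sub, norm_neg, hx₀] at h1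
    linarith
  have hunorm : 0 < ‖u‖ := norm_pos_iff.mpr hu
  -- shrinking trick
  have hC : ∀ z : X, ‖z‖ ≤ ‖u‖ → ε ≤ ‖T z - x₀‖ := by
    intro z hz
    by_contra hlt
    push_neg at hlt
    set δ := ‖T z - x₀‖ with hδ
    have hδ0 : 0 ≤ δ := norm_nonneg _
    have h1δ : 0 < 1 - δ := by linarith
    set t := (1 - ε) / (1 - δ) with ht
    have ht0 : 0 ≤ t := div_nonneg (by linarith) h1δ.le
    have ht1 : t < 1 := by rw [ht, div_lt_one h1δ]; linarith
    have htδ : t * (1 - δ) = 1 - ε := by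
      rw [ht]; field_simp
    have e1 : T (t • z) - x₀ = t • (T z - x₀) - (1 - t) • x₀ := by
      rw [T.map_smul_of_tower]; module
    have key : ‖T (t • z) - x₀‖ ≤ ε := by
      rw [e1]
      calc ‖t • (T z - x₀) - (1 - t) • x₀‖
          ≤ ‖t • (T z - x₀)‖ + ‖(1 - t) • x₀‖ := norm_sub_le _ _
        _ = t * δ + (1 - t) * 1 := by
            rw [norm_smul, norm_smul, Real.norm_eq_abs, Real.norm_eq_abs,
              abs_of_nonneg ht0, abs_of_nonneg (by linarith), hx₀, ← hδ]
        _ ≤ ε := by nlinarith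
    have h2 := hyn.2 (t • z) key
    rw [norm_smul, Real.norm_eq_abs, abs_of_nonneg ht0] at h2
    nlinarith
  have hwnorm : ‖T u - x₀‖ = ε := le_antisymm hyn.1 (hC u le_rfl)
  set w : X := T u - x₀ with hw'
  have hw : w ≠ 0 := by
    intro h
    rw [h, norm_zero] at hwnorm
    linarith
  -- separation
  have hconv : Convex ℝ (⇑T '' Metric.closedBall (0 : X) ‖u‖) := by
    refine (convex_closedBall (0 : X) ‖u‖).is_linear_image ?_
    exact ⟨fun a b => map_add T a b, fun c x => T.map_smul_of_tower c x⟩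
  have hdisj : Disjoint (Metric.ball x₀ ε) (⇑T '' Metric.closedBall (0 : X) ‖u‖) := by
    rw [Set.disjoint_left]
    rintro a ha ⟨z, hz, rfl⟩
    rw [Metric.mem_closedBall, dist_zero_right] at hz
    rw [Metric.mem_ball, dist_eq_norm] at ha
    have := hC z hz
    linarith
  obtain ⟨Φ, α, hball, himg⟩ := RCLike.geometric_hahn_banach_open (𝕜 := ℂ)
    (convex_ball x₀ ε) Metric.isOpen_ball hconv hdisj
  have hball' : ∀ a ∈ Metric.ball x₀ ε, (Φ a).re < α := by
    intro a ha; simpa using hball a ha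
  have hmin : ∀ z : X, ‖z‖ ≤ ‖u‖ → α ≤ (Φ (T z)).re := by
    intro z hz
    have : T z ∈ ⇑T '' Metric.closedBall (0 : X) ‖u‖ :=
      ⟨z, by simpa [Metric.mem_closedBall, dist_zero_right] using hz, rfl⟩
    simpa using himg _ this
  have hΦx₀ : (Φ x₀).re < α := hball' _ (Metric.mem_ball_self hε0)
  have hα0 : α ≤ 0 := by
    have := hmin 0 (by simp [hunorm.le])
    simpa using this
  set β := α - (Φ x₀).re with hβ
  have hβ0 : 0 < β := by rw [hβ]; linarith
  -- ε * ‖Φ‖ ≤ β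
  have hstep : ∀ δ : ℝ, 0 < δ → δ < ε → δ * ‖Φ‖ ≤ β := by
    intro δ hδ0 hδε
    have hbnd : ‖Φ‖ ≤ β / δ := by
      apply ContinuousLinearMap.opNorm_le_bound _ (div_nonneg hβ0.le hδ0.le)
      intro v
      rcases eq_or_ne v 0 with rfl | hv
      · simp
      have hv0 : 0 < ‖v‖ := norm_pos_iff.mpr hv
      rcases eq_or_ne (Φ v) 0 with h0 | h0
      · rw [h0, norm_zero]; positivity
      have hΦv0 : 0 < ‖Φ v‖ := norm_pos_iff.mpr h0
      set c : ℂ := ((δ / (‖v‖ * ‖Φ v‖) : ℝ) : ℂ) * starRingEnd ℂ (Φ v) with hc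
      have hcΦ : c * Φ v = ((δ * ‖Φ v‖ / ‖v‖ : ℝ) : ℂ) := by
        rw [hc, mul_assoc, mul_comm (starRingEnd ℂ (Φ v)), Complex.mul_conj]
        norm_cast
        rw [Complex.normSq_eq_norm_sq]
        have habs : ‖Φ v‖ ≠ 0 := norm_ne_zero_iff.mpr h0
        field_simp [hv0.ne', habs]
      have hcv : ‖c • v‖ = δ := by
        have h1 : ‖c • v‖ = ‖c‖ * ‖v‖ := norm_smul c v
        have h2 : ‖c‖ = ‖((δ / (‖v‖ * ‖Φ v‖) : ℝ) : ℂ)‖ * ‖starRingEnd ℂ (Φ v)‖ := by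
          rw [hc]; exact norm_mul _ _
        rw [h1, h2, Complex.norm_real, RCLike.norm_conj, Real.norm_eq_abs,
          abs_of_nonneg (by positivity)]
        have habs : ‖Φ v‖ ≠ 0 := norm_ne_zero_iff.mpr h0
        field_simp [hv0.ne', habs]
      have hmem : x₀ + c • v ∈ Metric.ball x₀ ε := by
        rw [Metric.mem_ball, dist_eq_norm, add_sub_cancel_left, hcv]
        exact hδε
      have h2 := hball' _ hmem
      rw [map_add, map_smul, smul_eq_mul, hcΦ, Complex.add_re, Complex.ofReal_re] at h2
      rw [div_mul_eq_mul_div, le_div_iff₀ hδ0]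
      have h3 : δ * ‖Φ v‖ / ‖v‖ < β := by rw [hβ]; linarith
      rw [div_lt_iff₀ hv0] at h3
      nlinarith
    calc δ * ‖Φ‖ ≤ δ * (β / δ) := by nlinarith
      _ = β := by field_simp
  have hkey : ε * ‖Φ‖ ≤ β := by
    by_contra hcon
    push_neg at hcon
    have hΦpos : 0 < ‖Φ‖ := by nlinarith [norm_nonneg Φ]
    set δ := (β / ‖Φ‖ + ε) / 2 with hδdef
    have h1 : β / ‖Φ‖ < ε := by rw [div_lt_iff₀ hΦpos]; nlinarith
    have hδ0 : 0 < δ := by positivity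
    have hδε : δ < ε := by rw [hδdef]; linarith
    have h2 := hstep δ hδ0 hδε
    have h3 : β / ‖Φ‖ < δ := by rw [hδdef]; linarith
    rw [div_lt_iff₀ hΦpos] at h3
    linarith
  -- equalities at u and w
  have hTu : α ≤ (Φ (T u)).re := hmin u le_rfl
  have hwre : (Φ w).re = (Φ (T u)).re - (Φ x₀).re := by
    rw [hw', map_sub, Complex.sub_re]
  have hrew : β ≤ (Φ w).re := by rw [hwre, hβ]; linarith
  have hΦw_le : ‖Φ w‖ ≤ ε * ‖Φ‖ := by
    calc ‖Φ w‖ ≤ ‖Φ‖ * ‖w‖ := Φ.le_opNorm w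
      _ = ε * ‖Φ‖ := by rw [hwnorm]; ring
  have hre_le : (Φ w).re ≤ ‖Φ w‖ := by
    simpa using Complex.re_le_norm (Φ w)
  have hΦwre : (Φ w).re = ε * ‖Φ‖ := le_antisymm (by linarith) (by linarith)
  have hβeq : β = ε * ‖Φ‖ := le_antisymm (by linarith) hkey
  have hΦwC : Φ w = ((ε * ‖Φ‖ : ℝ) : ℂ) := by
    have := eq_ofReal_of_norm_le_re (c := Φ w) (by rw [hΦwre]; linarith)
    rw [this, hΦwre]
  have hΦpos : 0 < ‖Φ‖ := by nlinarith [norm_nonneg Φ]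
  have hΦC : ((‖Φ‖ : ℝ) : ℂ) ≠ 0 := by exact_mod_cast hΦpos.ne'
  -- sf w
  have hsfw : sf w = ((ε / ‖Φ‖ : ℝ) : ℂ) • Φ := by
    refine ((hsf w hw).2.2 _ ?_ ?_).symm
    · rw [ContinuousLinearMap.smul_apply, smul_eq_mul, hΦwC, hwnorm]
      push_cast
      field_simp [hΦC]
    · have hns : ‖((ε / ‖Φ‖ : ℝ) : ℂ) • Φ‖ = ‖((ε / ‖Φ‖ : ℝ) : ℂ)‖ * ‖Φ‖ :=
        norm_smul ((ε / ‖Φ‖ : ℝ) : ℂ) Φ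
      rw [hns, Complex.norm_real, Real.norm_eq_abs,
        abs_of_nonneg (by positivity), hwnorm]
      field_simp
  -- Ψ = Φ ∘ T
  set Ψ : X →L[ℂ] ℂ := Φ.comp T with hΨ
  have hΨapp : ∀ z : X, Ψ z = Φ (T z) := fun z => rfl
  have hΨbound : ∀ z : X, ‖Ψ z‖ ≤ -α / ‖u‖ * ‖z‖ := by
    intro z
    rcases eq_or_ne z 0 with rfl | hz
    · simp
    have hz0 : 0 < ‖z‖ := norm_pos_iff.mpr hz
    rcases eq_or_ne (Ψ z) 0 with h0 | h0
    · rw [h0, norm_zero]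
      have : 0 ≤ -α / ‖u‖ := div_nonneg (by linarith) (norm_nonneg u)
      positivity
    have hΨz0 : 0 < ‖Ψ z‖ := norm_pos_iff.mpr h0
    set c : ℂ := -(((‖u‖ / (‖z‖ * ‖Ψ z‖) : ℝ) : ℂ) * starRingEnd ℂ (Ψ z)) with hc
    have hcΨ : c * Ψ z = -((‖u‖ * ‖Ψ z‖ / ‖z‖ : ℝ) : ℂ) := by
      rw [hc, neg_mul, neg_inj, mul_assoc, mul_comm (starRingEnd ℂ (Ψ z)), Complex.mul_conj]
      norm_cast
      rw [Complex.normSq_eq_norm_sq]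
      have habs : ‖Ψ z‖ ≠ 0 := norm_ne_zero_iff.mpr h0
      field_simp [hz0.ne', habs]
    have hcz : ‖c • z‖ = ‖u‖ := by
      have h1 : ‖c • z‖ = ‖c‖ * ‖z‖ := norm_smul c z
      have h2 : ‖c‖ = ‖((‖u‖ / (‖z‖ * ‖Ψ z‖) : ℝ) : ℂ)‖ * ‖starRingEnd ℂ (Ψ z)‖ := by
        rw [hc, norm_neg]; exact norm_mul _ _
      rw [h1, h2, Complex.norm_real, RCLike.norm_conj, Real.norm_eq_abs,
        abs_of_nonneg (by positivity)]
      have habs : ‖Ψ z‖ ≠ 0 := norm_ne_zero_iff.mpr h0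
      field_simp [hz0.ne', habs]
    have h2 := hmin (c • z) (le_of_eq hcz)
    rw [← hΨapp, map_smul, smul_eq_mul, hcΨ] at h2
    rw [Complex.neg_re, Complex.ofReal_re] at h2
    have h3 : ‖u‖ * ‖Ψ z‖ / ‖z‖ ≤ -α := by linarith
    rw [div_le_iff₀ hz0] at h3
    rw [div_mul_eq_mul_div, le_div_iff₀ hunorm]
    nlinarith
  intro x hx
  rw [hsfw, ContinuousLinearMap.smul_apply, smul_eq_mul]
  rcases eq_or_lt_of_le hα0 with hα | hα
  · -- α = 0 : Ψ = 0
    have hΨx : Ψ x = 0 := by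
      have hb := hΨbound x
      rw [hα] at hb
      simp only [neg_zero, zero_div, zero_mul] at hb
      exact norm_le_zero_iff.mp hb
    rw [← hΨapp, hΨx, mul_zero]
  · -- α < 0
    have hαne : α ≠ 0 := ne_of_lt hα
    have hαC : ((α : ℝ) : ℂ) ≠ 0 := by exact_mod_cast hαne
    have hΨu_re : (Ψ u).re = α := by
      rw [hΨapp]
      have h4 : (Φ (T u)).re = (Φ x₀).re + (Φ w).re := by rw [hwre]; ring
      rw [h4, hΦwre, ← hβeq, hβ]; ring
    have hΨuC : Ψ u = (α : ℂ) := by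
      have hn : ‖-Ψ u‖ ≤ (-Ψ u).re := by
        rw [Complex.neg_re, hΨu_re, norm_neg]
        have hb := hΨbound u
        have h3 : -α / ‖u‖ * ‖u‖ = -α := by field_simp
        linarith
      have h5 := eq_ofReal_of_norm_le_re hn
      rw [Complex.neg_re, hΨu_re] at h5
      have h6 : Ψ u = -(((-α : ℝ) : ℂ)) := by rw [← h5]; ring
      rw [h6]; push_cast; ring
    have hΨnorm : ‖Ψ‖ = -α / ‖u‖ := by
      refine le_antisymm (ContinuousLinearMap.opNorm_le_bound _
        (div_nonneg (by linarith) (norm_nonneg u)) hΨbound) ?_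
      have h1 : ‖Ψ u‖ ≤ ‖Ψ‖ * ‖u‖ := Ψ.le_opNorm u
      rw [hΨuC, Complex.norm_real, Real.norm_eq_abs, abs_of_neg hα] at h1
      rw [div_le_iff₀ hunorm]
      linarith
    have hsfu : sf u = ((‖u‖ ^ 2 / α : ℝ) : ℂ) • Ψ := by
      refine ((hsf u hu).2.2 _ ?_ ?_).symm
      · rw [ContinuousLinearMap.smul_apply, smul_eq_mul, hΨuC]
        push_cast
        field_simp [hαC]
      · have hns : ‖((‖u‖ ^ 2 / α : ℝ) : ℂ) • Ψ‖ = ‖((‖u‖ ^ 2 / α : ℝ) : ℂ)‖ * ‖Ψ‖ :=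
          norm_smul ((‖u‖ ^ 2 / α : ℝ) : ℂ) Ψ
        rw [hns, Complex.norm_real, Real.norm_eq_abs, hΨnorm, abs_div,
          abs_of_nonneg (pow_two_nonneg ‖u‖), abs_of_neg hα]
        field_simp [hαne, hunorm.ne']
    rw [hsfu, ContinuousLinearMap.smul_apply, smul_eq_mul] at hx
    have hΨx : Ψ x = 0 := by
      have hcoef : ((‖u‖ ^ 2 / α : ℝ) : ℂ) ≠ 0 := by
        have : (‖u‖ ^ 2 / α : ℝ) ≠ 0 := div_ne_zero (pow_ne_zero 2 hunorm.ne') hαne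
        exact_mod_cast this
      rcases mul_eq_zero.mp hx with h | h
      · exact absurd h hcoef
      · exact h
    rw [← hΨapp, hΨx, mul_zero]
end

section
/- Let X be a complex Banach space that is smooth and strictly convex, let x₀ ∈ X with ‖x₀‖ = 1, let 0 < ε < 1, and let w ∈ X with ‖x₀ − w‖ = ε. Then the following are equivalent: (a) ‖x₀ − λw‖ > ε for all λ ∈ [0,1); (b) Re (x₀ − w)*(x₀) ≥ ‖x₀ − w‖², where (x₀ − w)* is the support functional of x₀ − w. -/
set_option maxHeartbeats 4000000


open Filter Topology

/-- Sublemma 2.6: on a smooth strictly convex space, for a unit vector x₀ and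
w ∈ S(x₀, ε), one has ‖x₀ − λw‖ > ε for all λ ∈ [0,1) iff
Re (x₀ − w)*(x₀) ≥ ‖x₀ − w‖². -/
theorem minimality_iff_support_functional_ineq
    {X : Type*} [NormedAddCommGroup X] [NormedSpace ℂ X] [StrictConvexSpace ℝ X]
    (sf : X → (X →L[ℂ] ℂ))
    (hsf : ∀ x : X, x ≠ 0 → (sf x) x = (‖x‖ : ℂ) ^ 2 ∧ ‖sf x‖ = ‖x‖ ∧
      ∀ f : X →L[ℂ] ℂ, f x = (‖x‖ : ℂ) ^ 2 → ‖f‖ = ‖x‖ → f = sf x)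
    (x₀ : X) (hx₀ : ‖x₀‖ = 1) (ε : ℝ) (hε0 : 0 < ε) (hε1 : ε < 1)
    (w : X) (hw : ‖x₀ - w‖ = ε) :
    (∀ l : ℝ, 0 ≤ l → l < 1 → ε < ‖x₀ - l • w‖) ↔
      ‖x₀ - w‖ ^ 2 ≤ (sf (x₀ - w) x₀).re := by
  set u := x₀ - w with hu_def
  have hεu : ‖u‖ = ε := hw
  have hu0 : u ≠ 0 := by
    intro h; rw [h, norm_zero] at hεu; exact hε0.ne hεu
  have hw0 : w ≠ 0 := by
    intro h
    have h2 := hεu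
    rw [hu_def, h, sub_zero, hx₀] at h2
    exact hε1.ne' h2
  obtain ⟨hfu, hfnorm, huniq⟩ := hsf u hu0
  rw [hεu]
  constructor
  · -- (a) → (b)
    intro ha
    -- slope function
    set S : X → ℝ → ℝ := fun y t => (‖u + t • y‖ - ε) / t with hS_def
    have hS_mono : ∀ y : X, ∀ s t : ℝ, 0 < s → s ≤ t → S y s ≤ S y t := by
      intro y s t hs hst
      have ht : 0 < t := hs.trans_le hst
      have key : t • (u + s • y) = (t - s) • u + s • (u + t • y) := by
        module
      have h1 : t * ‖u + s • y‖ ≤ (t - s) * ε + s * ‖u + t • y‖ := by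
        calc t * ‖u + s • y‖ = ‖t • (u + s • y)‖ := by
              rw [norm_smul, Real.norm_eq_abs, abs_of_pos ht]
          _ ≤ ‖(t - s) • u‖ + ‖s • (u + t • y)‖ := by rw [key]; exact norm_add_le _ _
          _ = (t - s) * ε + s * ‖u + t • y‖ := by
              rw [norm_smul, norm_smul, Real.norm_eq_abs, Real.norm_eq_abs,
                abs_of_nonneg (by linarith), abs_of_pos hs, hεu]
      rw [hS_def]
      simp only
      rw [div_le_div_iff₀ hs ht]
      nlinarith
    have hS_lb : ∀ y : X, ∀ t : ℝ, 0 < t → -‖y‖ ≤ S y t := by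
      intro y t ht
      have h2 : ‖t • y‖ = t * ‖y‖ := by
        rw [norm_smul, Real.norm_eq_abs, abs_of_pos ht]
      have h1 : ε - t * ‖y‖ ≤ ‖u + t • y‖ := by
        have h3 : ‖u‖ ≤ ‖u + t • y‖ + ‖t • y‖ := by
          calc ‖u‖ = ‖(u + t • y) - t • y‖ := by congr 1; abel
            _ ≤ ‖u + t • y‖ + ‖t • y‖ := norm_sub_le _ _
        rw [hεu] at h3; linarith
      rw [hS_def]; simp only
      rw [le_div_iff₀ ht]
      nlinarith
    have hS_ub : ∀ y : X, ∀ t : ℝ, 0 < t → S y t ≤ ‖y‖ := by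
      intro y t ht
      have h2 : ‖t • y‖ = t * ‖y‖ := by
        rw [norm_smul, Real.norm_eq_abs, abs_of_pos ht]
      have h1 : ‖u + t • y‖ ≤ ε + t * ‖y‖ := by
        have := norm_add_le u (t • y)
        rw [hεu, h2] at this; linarith
      rw [hS_def]; simp only
      rw [div_le_iff₀ ht]
      nlinarith
    -- the lower Gateaux derivative functional
    set p : X → ℝ := fun y => sInf (S y '' Set.Ioi 0) with hp_def
    have hbdd : ∀ y : X, BddBelow (S y '' Set.Ioi 0) := by
      intro y
      refine ⟨-‖y‖, ?_⟩
      rintro a ⟨t, ht, rfl⟩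
      exact hS_lb y t ht
    have hne : ∀ y : X, (S y '' Set.Ioi 0).Nonempty :=
      fun y => ⟨S y 1, 1, Set.mem_Ioi.mpr one_pos, rfl⟩
    have hp_le : ∀ y : X, ∀ t : ℝ, 0 < t → p y ≤ S y t := by
      intro y t ht
      exact csInf_le (hbdd y) ⟨t, ht, rfl⟩
    have hle_p : ∀ y : X, ∀ c : ℝ, (∀ t : ℝ, 0 < t → c ≤ S y t) → c ≤ p y := by
      intro y c hc
      refine le_csInf (hne y) ?_
      rintro a ⟨t, ht, rfl⟩
      exact hc t ht
    have hp_zero : p 0 = 0 := by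
      have h1 : ∀ t : ℝ, 0 < t → S 0 t = 0 := by
        intro t ht
        rw [hS_def]; simp [hεu]
      refine le_antisymm ?_ ?_
      · rw [← h1 1 one_pos]; exact hp_le 0 1 one_pos
      · exact hle_p 0 0 (fun t ht => (h1 t ht).ge)
    have hp_smul : ∀ c : ℝ, 0 < c → ∀ y : X, p (c • y) = c * p y := by
      intro c hc y
      have hkey : ∀ t : ℝ, 0 < t → S (c • y) t = c * S y (c * t) := by
        intro t ht
        rw [hS_def]; simp only
        rw [smul_smul, mul_comm t c, ← smul_smul]
        rw [eq_comm, mul_comm c t]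
        field_simp
      refine le_antisymm ?_ ?_
      · have h1 : ∀ t : ℝ, 0 < t → p (c • y) ≤ c * S y t := by
          intro t ht
          have h2 := hp_le (c • y) (t / c) (by positivity)
          rwa [hkey (t / c) (by positivity), mul_div_cancel₀ _ hc.ne'] at h2
        have h3 : p (c • y) / c ≤ p y :=
          hle_p y _ (fun t ht => (div_le_iff₀' hc).mpr (h1 t ht))
        calc p (c • y) = c * (p (c • y) / c) := by field_simp
          _ ≤ c * p y := by
            exact mul_le_mul_of_nonneg_left h3 hc.le
      · refine hle_p (c • y) (c * p y) (fun t ht => ?_)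
        rw [hkey t ht]
        exact mul_le_mul_of_nonneg_left (hp_le y (c * t) (by positivity)) hc.le
    have hp_add : ∀ x y : X, p (x + y) ≤ p x + p y := by
      intro x y
      by_contra hcon
      push_neg at hcon
      set δ := (p (x + y) - (p x + p y)) / 2 with hδ_def
      have hδ : 0 < δ := by rw [hδ_def]; linarith
      have hpx : p x = sInf (S x '' Set.Ioi 0) := rfl
      have hpy : p y = sInf (S y '' Set.Ioi 0) := rfl
      obtain ⟨a₁, ⟨t₁, ht₁, rfl⟩, ha₁⟩ :=
        exists_lt_of_csInf_lt (hne x) (show sInf (S x '' Set.Ioi 0) < p x + δ by linarith)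
      obtain ⟨a₂, ⟨t₂, ht₂, rfl⟩, ha₂⟩ :=
        exists_lt_of_csInf_lt (hne y) (show sInf (S y '' Set.Ioi 0) < p y + δ by linarith)
      rw [Set.mem_Ioi] at ht₁ ht₂
      set t := min t₁ t₂ / 2 with ht_def
      have ht : 0 < t := by
        rw [ht_def]
        have := lt_min ht₁ ht₂
        positivity
      have h2t₁ : 2 * t ≤ t₁ := by
        rw [ht_def]
        have := min_le_left t₁ t₂; linarith
      have h2t₂ : 2 * t ≤ t₂ := by
        rw [ht_def]
        have := min_le_right t₁ t₂; linarith
      have hslope : S (x + y) t ≤ S x (2 * t) + S y (2 * t) := by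
        have hA : (2 : ℝ) • (u + t • (x + y)) = (u + (2 * t) • x) + (u + (2 * t) • y) := by
          module
        have hA2 : 2 * ‖u + t • (x + y)‖ ≤ ‖u + (2 * t) • x‖ + ‖u + (2 * t) • y‖ := by
          calc 2 * ‖u + t • (x + y)‖ = ‖(2 : ℝ) • (u + t • (x + y))‖ := by
                rw [norm_smul]; simp
            _ = ‖(u + (2 * t) • x) + (u + (2 * t) • y)‖ := by rw [hA]
            _ ≤ _ := norm_add_le _ _
        rw [hS_def]; simp only
        rw [← add_div, div_le_div_iff₀ ht (by positivity)]
        nlinarith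
      have hfin : p (x + y) < p (x + y) := by
        calc p (x + y) ≤ S (x + y) t := hp_le _ t ht
          _ ≤ S x (2 * t) + S y (2 * t) := hslope
          _ ≤ S x t₁ + S y t₂ := by
            have m1 := hS_mono x (2 * t) t₁ (by positivity) h2t₁
            have m2 := hS_mono y (2 * t) t₂ (by positivity) h2t₂
            linarith
          _ < (p x + δ) + (p y + δ) := by linarith
          _ = p (x + y) := by rw [hδ_def]; ring
      exact lt_irrefl _ hfin
    have hp_u : p u = ε := by
      have h1 : ∀ t : ℝ, 0 < t → S u t = ε := by
        intro t ht
        rw [hS_def]; simp only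
        have : u + t • u = (1 + t) • u := by
          rw [add_smul, one_smul]
        rw [this, norm_smul, Real.norm_eq_abs, abs_of_pos (by linarith), hεu]
        field_simp
        ring
      refine le_antisymm ?_ (hle_p u ε (fun t ht => (h1 t ht).ge))
      rw [← h1 1 one_pos]; exact hp_le u 1 one_pos
    have hp_neg_u : p (-u) = -ε := by
      have h1 : ∀ t : ℝ, 0 < t → S (-u) t = (|1 - t| * ε - ε) / t := by
        intro t ht
        rw [hS_def]; simp only
        have : u + t • (-u) = (1 - t) • u := by
          rw [sub_smul, one_smul, smul_neg]; abel
        rw [this, norm_smul, Real.norm_eq_abs, hεu]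
      refine le_antisymm ?_ ?_
      · have h2 := hp_le (-u) (1/2) (by norm_num)
        rw [h1 (1/2) (by norm_num)] at h2
        have : (|1 - (1:ℝ)/2| * ε - ε) / (1/2) = -ε := by
          rw [show |1 - (1:ℝ)/2| = 1/2 by norm_num]
          ring
        linarith [h2, this ▸ h2]
      · refine hle_p (-u) (-ε) (fun t ht => ?_)
        rw [h1 t ht, le_div_iff₀ ht]
        have habs : 1 - t ≤ |1 - t| := le_abs_self _
        nlinarith
    have hp_w : 0 ≤ p w := by
      refine hle_p w 0 (fun t ht => ?_)
      rcases le_or_gt t 1 with h | h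
      · have hx : u + t • w = x₀ - (1 - t) • w := by
          rw [hu_def, sub_smul, one_smul]; abel
        have h2 := ha (1 - t) (by linarith) (by linarith)
        rw [← hx] at h2
        rw [hS_def]; simp only
        apply div_nonneg _ ht.le
        linarith
      · have m := hS_mono w 1 t one_pos h.le
        have h1 : S w 1 = 1 - ε := by
          rw [hS_def]; simp only
          rw [one_smul]
          have : u + w = x₀ := by rw [hu_def]; abel
          rw [this, hx₀]
          norm_num
        rw [h1] at m
        linarith
    -- Hahn-Banach extension
    have hsub : ∀ z : (LinearPMap.mkSpanSingleton (K := ℝ) (L := ℝ) (σ := RingHom.id ℝ) w (p w) hw0).domain,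
        (LinearPMap.mkSpanSingleton (K := ℝ) (L := ℝ) (σ := RingHom.id ℝ) w (p w) hw0) z ≤ p z := by
      rintro ⟨z, hz⟩
      obtain ⟨c, rfl⟩ := Submodule.mem_span_singleton.mp hz
      have happ : (LinearPMap.mkSpanSingleton (K := ℝ) (L := ℝ) (σ := RingHom.id ℝ) w (p w) hw0) ⟨c • w, hz⟩ = c • p w :=
        LinearPMap.mkSpanSingleton'_apply _ _ _ c _
      rw [happ]
      show c • p w ≤ p (c • w)
      rw [smul_eq_mul]
      rcases lt_trichotomy c 0 with hc | hc | hc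
      · have h1 : c • w = (-c) • (-w) := by rw [smul_neg, neg_smul, neg_neg]
        rw [h1, hp_smul (-c) (by linarith)]
        have h2 : 0 ≤ p w + p (-w) := by
          have := hp_add w (-w)
          rw [add_neg_cancel, hp_zero] at this
          linarith
        nlinarith
      · subst hc
        rw [zero_mul, zero_smul, hp_zero]
      · rw [hp_smul c hc]
    obtain ⟨g, hg_dom, hg_le⟩ := exists_extension_of_le_sublinear
      (LinearPMap.mkSpanSingleton (K := ℝ) (L := ℝ) (σ := RingHom.id ℝ) w (p w) hw0) p hp_smul hp_add hsub
    -- properties of g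
    have hg_w : g w = p w := by
      have h1 := hg_dom ⟨w, Submodule.mem_span_singleton_self w⟩
      rw [LinearPMap.mkSpanSingleton_apply] at h1
      exact h1
    have hg_u : g u = ε := by
      have h1 : g u ≤ ε := by have := hg_le u; rwa [hp_u] at this
      have h2 : g (-u) ≤ -ε := by have := hg_le (-u); rwa [hp_neg_u] at this
      rw [map_neg] at h2
      linarith
    have hg_bound : ∀ y : X, ‖g y‖ ≤ 1 * ‖y‖ := by
      intro y
      rw [one_mul, Real.norm_eq_abs, abs_le]
      constructor
      · have h1 := (hg_le (-y)).trans ((hp_le (-y) 1 one_pos).trans (hS_ub (-y) 1 one_pos))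
        rw [map_neg, norm_neg] at h1
        linarith
      · exact (hg_le y).trans ((hp_le y 1 one_pos).trans (hS_ub y 1 one_pos))
    set gc : X →L[ℝ] ℝ := LinearMap.mkContinuous g 1 hg_bound with hgc_def
    have hgc_norm : ‖gc‖ ≤ 1 := LinearMap.mkContinuous_norm_le g one_pos.le hg_bound
    have hgc_apply : ∀ y : X, gc y = g y := fun y => rfl
    -- complexify
    set F : X →L[ℂ] ℂ := StrongDual.extendRCLike gc with hF_def
    have hF_re : ∀ y : X, (F y).re = g y := by
      intro y
      have h := ContinuousLinearMap.extendTo𝕜'_apply (𝕜 := ℂ) gc y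
      rw [hF_def, h]
      have hgy : gc y = g y := rfl
      have hgy2 : gc ((Complex.I : ℂ) • y) = g ((Complex.I : ℂ) • y) := rfl
      simp [Complex.sub_re, Complex.mul_re, hgy, hgy2]
    have hF_norm_le : ‖F‖ ≤ 1 := by
      rw [hF_def, ContinuousLinearMap.norm_extendTo𝕜']
      exact hgc_norm
    have hFu_norm : ‖F u‖ ≤ ε := by
      calc ‖F u‖ ≤ ‖F‖ * ‖u‖ := F.le_opNorm u
        _ ≤ 1 * ε := by
          apply mul_le_mul hF_norm_le hεu.le (norm_nonneg u) one_pos.le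
        _ = ε := one_mul ε
    have hFu_re : (F u).re = ε := by rw [hF_re, hg_u]
    have hFu : F u = (ε : ℂ) := by
      have him : (F u).im = 0 := by
        have h1 : ‖F u‖ ^ 2 = (F u).re ^ 2 + (F u).im ^ 2 := by
          rw [Complex.sq_norm, Complex.normSq_apply]
          ring
        nlinarith [hFu_norm, hFu_re, norm_nonneg (F u), hε0]
      apply Complex.ext
      · rw [hFu_re]; simp
      · rw [him]; simp
    have hF_norm : ‖F‖ = 1 := by
      refine le_antisymm hF_norm_le ?_
      have h1 : ε ≤ ‖F‖ * ε := by
        calc ε = ‖F u‖ := by rw [hFu]; simp [abs_of_pos hε0]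
          _ ≤ ‖F‖ * ‖u‖ := F.le_opNorm u
          _ = ‖F‖ * ε := by rw [hεu]
      have h2 : 0 < ε := hε0
      nlinarith
    -- the candidate support functional
    set G : X →L[ℂ] ℂ := (ε : ℂ) • F with hG_def
    have hGu : G u = (‖u‖ : ℂ) ^ 2 := by
      rw [hG_def]
      simp only [ContinuousLinearMap.smul_apply, smul_eq_mul]
      rw [hFu, hεu]
      push_cast
      ring
    have hGnorm : ‖G‖ = ‖u‖ := by
      rw [hG_def, norm_smul ((ε : ℝ) : ℂ) F, hF_norm, hεu]
      simp [abs_of_pos hε0]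
    have hGsf : G = sf u := huniq G hGu hGnorm
    -- conclude
    have hx₀_decomp : x₀ = u + w := by rw [hu_def]; abel
    have hgx₀ : g x₀ = ε + p w := by
      rw [hx₀_decomp, map_add, hg_u, hg_w]
    have hfinal : (sf u x₀).re = ε * (ε + p w) := by
      rw [← hGsf, hG_def]
      simp only [ContinuousLinearMap.smul_apply, smul_eq_mul]
      rw [Complex.mul_re]
      simp only [Complex.ofReal_re, Complex.ofReal_im, zero_mul, sub_zero]
      rw [hF_re, hgx₀]
    rw [hfinal]
    nlinarith [hp_w, hε0]
  · -- (b) → (a)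
    intro hb l hl0 hl1
    set f := sf u with hf_def
    have hRe : ε ^ 2 ≤ (f x₀).re := hb
    set v := x₀ - l • w with hv_def
    have hv_eq : v = (1 - l) • x₀ + l • u := by
      rw [hv_def, hu_def, smul_sub, sub_smul, one_smul]
      abel
    have hfure : (f u).re = ε ^ 2 := by
      rw [hfu, hεu]
      norm_cast
    have hfv_re : ε ^ 2 ≤ (f v).re := by
      have hfv : f v = ((1 - l : ℝ) : ℂ) * f x₀ + ((l : ℝ) : ℂ) * f u := by
        rw [hv_eq, map_add, f.map_smul_of_tower, f.map_smul_of_tower,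
          Complex.real_smul, Complex.real_smul]
      rw [hfv]
      simp only [Complex.add_re, Complex.mul_re, Complex.ofReal_re, Complex.ofReal_im,
        zero_mul, sub_zero]
      nlinarith
    have hfv_le : (f v).re ≤ ε * ‖v‖ := by
      calc (f v).re ≤ ‖f v‖ := Complex.re_le_norm (f v)
        _ ≤ ‖f‖ * ‖v‖ := f.le_opNorm v
        _ = ε * ‖v‖ := by rw [hfnorm, hεu]
    have hεv : ε ≤ ‖v‖ := by nlinarith [hfv_re, hfv_le, hε0]
    rcases lt_or_eq_of_le hεv with h | h
    · exact h
    -- ‖v‖ = ε : derive contradiction via strict convexity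
    exfalso
    have hvnorm : ‖v‖ = ε := h.symm
    rw [hvnorm] at hfv_le
    have hfvre : (f v).re = ε ^ 2 := by nlinarith [hfv_re, hfv_le]
    have hsum : ‖v + u‖ = ‖v‖ + ‖u‖ := by
      have hle : ‖v + u‖ ≤ 2 * ε := by
        have := norm_add_le v u; rw [hvnorm, hεu] at this; linarith
      have hge : 2 * ε ≤ ‖v + u‖ := by
        have h1 : (f (v + u)).re = 2 * ε ^ 2 := by
          rw [map_add]; simp [Complex.add_re, hfvre, hfure]; ring
        have h2 : (f (v + u)).re ≤ ε * ‖v + u‖ := by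
          calc (f (v+u)).re ≤ ‖f (v+u)‖ := Complex.re_le_norm _
            _ ≤ ‖f‖ * ‖v + u‖ := f.le_opNorm _
            _ = ε * ‖v + u‖ := by rw [hfnorm, hεu]
        nlinarith
      rw [hvnorm, hεu]; linarith
    have hvu : v = u := eq_of_norm_eq_of_norm_add_eq (by rw [hvnorm, hεu]) hsum
    have h3 : x₀ - l • w = x₀ - w := by rw [← hv_def, ← hu_def, hvu]
    have h5 : l • w = w := sub_right_inj.mp h3
    have h6 : (1 - l) • w = 0 := by rw [sub_smul, one_smul, h5, sub_self]
    rcases smul_eq_zero.mp h6 with h7 | h7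
    · have : (1 : ℝ) - l ≠ 0 := by intro hx; linarith
      exact this h7
    · exact hw0 h7
end

section
/- Let X be a complex Banach space whose norm is uniformly convex and smooth. Then for every η > 0 there exists ε ∈ [1/2, 1) such that for every x₀ ∈ X with ‖x₀‖ = 1 and every w ∈ X satisfying ‖x₀ − w‖ = ε and ‖x₀ − λw‖ > ε for all λ ∈ [0,1), one has ‖w‖ ≤ η. -/
open Filter Topology

/-- Lemma 2.7: on a uniformly convex and smooth complex Banach space, for every η > 0
there is ε ∈ [1/2, 1) so that every w ∈ S(x₀, ε) with ‖x₀ − λw‖ > ε for all λ ∈ [0,1)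
satisfies ‖w‖ ≤ η. -/
theorem norm_le_of_minimality
    {X : Type*} [NormedAddCommGroup X] [NormedSpace ℂ X] [UniformConvexSpace X]
    (h_smooth : ∀ x : X, x ≠ 0 → ∃! f : X →L[ℂ] ℂ, f x = (‖x‖ : ℂ) ^ 2 ∧ ‖f‖ = ‖x‖) :
    ∀ η : ℝ, 0 < η → ∃ ε : ℝ, 1 / 2 ≤ ε ∧ ε < 1 ∧
      ∀ x₀ w : X, ‖x₀‖ = 1 → ‖x₀ - w‖ = ε →
        (∀ l : ℝ, 0 ≤ l → l < 1 → ε < ‖x₀ - l • w‖) → ‖w‖ ≤ η := by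
  intro η hη
  obtain ⟨δ, hδ0, hδ⟩ :=
    exists_forall_sphere_dist_add_le_two_sub X (half_pos hη)
  set μ : ℝ := min δ (min (η / 4) (1 / 4)) with hμdef
  have hμ0 : 0 < μ := lt_min hδ0 (lt_min (by linarith) (by norm_num))
  have hμδ : μ ≤ δ := min_le_left _ _
  have hμη : μ ≤ η / 4 := le_trans (min_le_right _ _) (min_le_left _ _)
  have hμ4 : μ ≤ 1 / 4 := le_trans (min_le_right _ _) (min_le_right _ _)
  refine ⟨1 - μ, by linarith, by linarith, ?_⟩
  intro x₀ w hx₀ hw hmin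
  set ε : ℝ := 1 - μ with hεdef
  by_cases hwsmall : ‖w‖ < μ / 2
  · linarith
  push_neg at hwsmall
  have hw0 : ‖w‖ > 0 := lt_of_lt_of_le (by linarith) hwsmall
  set t : ℝ := μ / (2 * ‖w‖) with htdef
  have ht0 : 0 < t := div_pos hμ0 (by positivity)
  have htw : t * ‖w‖ = μ / 2 := by
    field_simp [htdef]
    rw [htdef, div_mul_eq_mul_div, div_mul_eq_mul_div, div_eq_iff (by positivity)]; ring
  have ht1 : t ≤ 1 := by
    rw [htdef, div_le_one (by positivity)]
    linarith
  set b : X := x₀ - (1 - t) • w with hbdef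
  have hbε : ε < ‖b‖ := hmin (1 - t) (by linarith) (by linarith)
  have hb0 : b ≠ 0 := by
    intro h
    rw [h, norm_zero] at hbε
    linarith
  obtain ⟨g, hg1, hgb⟩ := exists_dual_vector ℂ b (norm_ne_zero_iff.mpr hb0)
  -- basic facts
  set a : X := x₀ - w with hadef
  have hab : b = a + t • w := by
    rw [hadef, hbdef, sub_smul, one_smul]
    abel
  have hga : (g a).re ≤ ε := by
    calc (g a).re ≤ ‖g a‖ := by
          exact (Complex.re_le_norm _)
      _ ≤ ‖g‖ * ‖a‖ := g.le_opNorm a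
      _ = ε := by rw [hg1, one_mul, hadef, hw]
  have hgtw : (g (t • w)).re = t * (g w).re := by
    rw [ContinuousLinearMap.map_smul_of_tower, Complex.real_smul, Complex.mul_re]
    simp
  have hgbre : (g b).re = ‖b‖ := by rw [hgb]; simp
  have hgw0 : 0 ≤ (g w).re := by
    have : (g b).re = (g a).re + t * (g w).re := by
      rw [hab, map_add, Complex.add_re, hgtw]
    nlinarith
  have hgx₀ : ε < (g x₀).re := by
    have hx₀b : x₀ = b + (1 - t) • w := by rw [hbdef]; abel
    have : (g x₀).re = (g b).re + (1 - t) * (g w).re := by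
      rw [hx₀b, map_add, Complex.add_re, ContinuousLinearMap.map_smul_of_tower, Complex.real_smul,
        Complex.mul_re]
      simp
    nlinarith
  -- the unit vector u
  set u : X := ‖b‖⁻¹ • b with hudef
  have hbnorm0 : (0:ℝ) < ‖b‖ := by linarith
  have hu1 : ‖u‖ = 1 := by
    rw [hudef, norm_smul, norm_inv, norm_norm, inv_mul_cancel₀ (ne_of_gt hbnorm0)]
  have hgu : (g u).re = 1 := by
    rw [hudef, ContinuousLinearMap.map_smul_of_tower, Complex.real_smul, Complex.mul_re]
    simp [hgbre, inv_mul_cancel₀ (ne_of_gt hbnorm0)]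
  have hsum : 2 - δ < ‖x₀ + u‖ := by
    have h1 : (g (x₀ + u)).re ≤ ‖x₀ + u‖ := by
      calc (g (x₀ + u)).re ≤ ‖g (x₀ + u)‖ := Complex.re_le_norm _
        _ ≤ ‖g‖ * ‖x₀ + u‖ := g.le_opNorm _
        _ = ‖x₀ + u‖ := by rw [hg1, one_mul]
    have h2 : (g (x₀ + u)).re = (g x₀).re + 1 := by
      rw [map_add, Complex.add_re, hgu]
    linarith
  have hclose : ‖x₀ - u‖ < η / 2 := by
    by_contra h
    push_neg at h
    have := hδ hx₀ hu1 h
    linarith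
  -- norm of b
  have hbub : ‖b‖ ≤ ε + μ / 2 := by
    calc ‖b‖ = ‖a + t • w‖ := by rw [hab]
      _ ≤ ‖a‖ + ‖t • w‖ := norm_add_le _ _
      _ = ε + t * ‖w‖ := by
          rw [hadef, hw, norm_smul, Real.norm_eq_abs, abs_of_pos ht0]
      _ = ε + μ / 2 := by rw [htw]
  have hub : ‖u - b‖ ≤ μ := by
    have : u - b = (‖b‖⁻¹ - 1) • b := by
      rw [hudef, sub_smul, one_smul]
    rw [this, norm_smul, Real.norm_eq_abs]
    have hb1 : ‖b‖ ≤ 1 := by linarith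
    rw [abs_of_nonneg (by
      have : (1:ℝ) ≤ ‖b‖⁻¹ := by
        rw [le_inv_comm₀ one_pos hbnorm0]; simpa using hb1
      linarith)]
    have : (‖b‖⁻¹ - 1) * ‖b‖ = 1 - ‖b‖ := by
      field_simp
    rw [this]
    linarith
  have hdecomp : w = (x₀ - u) + (u - b) + (b - a) := by
    rw [hadef]; abel
  have hba : ‖b - a‖ = μ / 2 := by
    have : b - a = t • w := by rw [hab]; abel
    rw [this, norm_smul, Real.norm_eq_abs, abs_of_pos ht0, htw]
  calc ‖w‖ = ‖(x₀ - u) + (u - b) + (b - a)‖ := by rw [← hdecomp]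
    _ ≤ ‖(x₀ - u) + (u - b)‖ + ‖b - a‖ := norm_add_le _ _
    _ ≤ ‖x₀ - u‖ + ‖u - b‖ + ‖b - a‖ := by
        have := norm_add_le (x₀ - u) (u - b); linarith
    _ ≤ η := by rw [hba]; linarith
end

section
/- Let X be a complex Banach space, let f ∈ X* with f ≠ 0, and let g ∈ X* be such that for all x ∈ X, if Re f(x) < 0 then Re g(x) ≥ 0. Then ker(f) ⊆ ker(g), and moreover there exists a real number a ≤ 0 such that g = a·f. -/
/-!
If `g` did not vanish at some `x ∈ ker f`, then moving along `x` would change `g` arbitrarily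
while leaving `f` fixed, so some point of the half-space `Re f < 0` would be sent by `g` to `-1`.
Hence `ker f ≤ ker g`, i.e. `g = a • f` for some `a : ℂ`. Since `f` is onto `ℂ`, this means
`Re (a * z) ≥ 0` whenever `Re z < 0`, which forces `a` to be a nonpositive real.
-/

open scoped ComplexOrder

namespace Complex

theorem nonpos_of_re_mul_nonneg_of_re_neg {a : ℂ} (h : ∀ z : ℂ, z.re < 0 → 0 ≤ (a * z).re) :
    a ≤ 0 := by
  refine nonpos_iff.2 ⟨by simpa using h (-1) (by simp), ?_⟩
  by_contra him
  have hz := h ⟨-1, (1 - a.re) / a.im⟩ (by simp)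
  have hre : (a * ⟨-1, (1 - a.re) / a.im⟩).re = -1 := by
    simp only [mul_re]
    field_simp
    ring
  linarith

end Complex

namespace LinearMap

section Field

variable {𝕜 E : Type*} [Field 𝕜] [AddCommGroup E] [Module 𝕜 E] {f g : E →ₗ[𝕜] 𝕜}

theorem exists_eq_smul_of_ker_le_ker (h : ker f ≤ ker g) : ∃ a : 𝕜, g = a • f := by
  have hg := mem_span_of_iInf_ker_le_ker (ι := Unit) (L := fun _ => f) (K := g) (by simpa using h)
  obtain ⟨a, ha⟩ := Submodule.mem_span_singleton.1 (by simpa using hg)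
  exact ⟨a, ha.symm⟩

end Field

variable {M : Type*} [AddCommGroup M] [Module ℂ M] {f g : M →ₗ[ℂ] ℂ}

theorem ker_le_ker_of_re_nonneg_of_re_neg (hf : f ≠ 0)
    (h : ∀ x, (f x).re < 0 → 0 ≤ (g x).re) : ker f ≤ ker g := by
  obtain ⟨y, hy⟩ := surjective_of_ne_zero hf 1
  intro x hx
  rw [mem_ker] at hx ⊢
  by_contra hgx
  set c := (g y - 1) / g x
  have hneg := h (c • x - y) (by simp [hx, hy])
  have hg : g (c • x - y) = -1 := by simp [c, div_mul_cancel₀ _ hgx]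
  norm_num [hg] at hneg

theorem exists_nonpos_eq_smul_of_re_nonneg_of_re_neg (hf : f ≠ 0)
    (h : ∀ x, (f x).re < 0 → 0 ≤ (g x).re) : ∃ a : ℂ, a ≤ 0 ∧ g = a • f := by
  obtain ⟨a, rfl⟩ := exists_eq_smul_of_ker_le_ker (ker_le_ker_of_re_nonneg_of_re_neg hf h)
  refine ⟨a, Complex.nonpos_of_re_mul_nonneg_of_re_neg fun z hz => ?_, rfl⟩
  obtain ⟨x, rfl⟩ := surjective_of_ne_zero hf z
  exact h x hz

end LinearMap

/-- Remark 2.8: if f ≠ 0 and Re f(x) < 0 implies Re g(x) ≥ 0 for all x, then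
ker(f) ⊆ ker(g) and g = a·f for some real a ≤ 0. -/
theorem ker_subset_and_eq_nonpos_smul
    {X : Type*} [NormedAddCommGroup X] [NormedSpace ℂ X]
    (f g : X →L[ℂ] ℂ) (hf : f ≠ 0)
    (h : ∀ x : X, (f x).re < 0 → 0 ≤ (g x).re) :
    (∀ x : X, f x = 0 → g x = 0) ∧ ∃ a : ℝ, a ≤ 0 ∧ g = (a : ℂ) • f := by
  obtain ⟨a, ha, hga⟩ := LinearMap.exists_nonpos_eq_smul_of_re_nonneg_of_re_neg
    (f := (f : X →ₗ[ℂ] ℂ)) (g := g) (ContinuousLinearMap.coe_injective.ne hf) h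
  obtain ⟨ha_re, ha_im⟩ := Complex.nonpos_iff.1 ha
  have hg : g = (a.re : ℂ) • f := by
    ext x
    simpa [Complex.ext_iff, ha_im] using LinearMap.congr_fun hga x
  exact ⟨fun x hx => by simp [hg, hx], a.re, ha_re, hg⟩
end

section
/- Let X be a complex Banach space and let Q be a bounded linear operator on X. If there exists a nonzero compact bounded linear operator K on X with KQ = QK, then Q satisfies property (★): for every ε ∈ (0,1) there exists x₀ ∈ X with ‖x₀‖ = 1 such that for every weakly convergent sequence (xₙ) in X with ‖xₙ − x₀‖ = ε for all n, there exist a subsequence (x_{n_k}) of (xₙ) and a sequence (K_k) of bounded operators commuting with Q such that ‖K_k‖ ≤ 1 and ‖K_k x₀‖ ≥ (1+ε)/2 for all k, and (K_k x_{n_k})_k converges in norm. -/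
open Filter Topology

set_option maxHeartbeats 1000000 in
/-- If Q commutes with a nonzero compact operator K, then Q satisfies property (★). -/
theorem propertyStar_of_commutes_with_compact
    {X : Type*} [NormedAddCommGroup X] [NormedSpace ℂ X]
    (Q K : X →L[ℂ] X) (hK : K ≠ 0) (hKcompact : IsCompactOperator ⇑K)
    (hcomm : K ∘L Q = Q ∘L K) :
    ∀ ε : ℝ, 0 < ε → ε < 1 → ∃ x₀ : X, ‖x₀‖ = 1 ∧
      ∀ x : ℕ → X,
        (∃ z : X, ∀ f : X →L[ℂ] ℂ, Tendsto (fun m => f (x m)) atTop (𝓝 (f z))) →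
        (∀ m, ‖x m - x₀‖ = ε) →
        ∃ (n : ℕ → ℕ) (Kk : ℕ → X →L[ℂ] X), StrictMono n ∧
          (∀ k, (Kk k) ∘L Q = Q ∘L (Kk k)) ∧
          (∀ k, ‖Kk k‖ ≤ 1 ∧ (1 + ε) / 2 ≤ ‖(Kk k) x₀‖) ∧
          (∃ w : X, Tendsto (fun k => (Kk k) (x (n k))) atTop (𝓝 w)) := by
  intro ε hε0 hε1
  have hKnorm : 0 < ‖K‖ := norm_pos_iff.mpr hK
  have hr : (1 + ε) / 2 * ‖K‖ < ‖K‖ := by nlinarith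
  obtain ⟨y, hy1, hy2⟩ := K.exists_lt_apply_of_lt_opNorm hr
  have hKy : 0 < ‖K y‖ := lt_of_le_of_lt (by positivity) hy2
  have hyne : y ≠ 0 := by
    intro h
    simp [h] at hKy
  have hynorm : 0 < ‖y‖ := norm_pos_iff.mpr hyne
  have hx₀n : ‖((‖y‖⁻¹ : ℂ) • y : X)‖ = 1 := norm_smul_inv_norm hyne
  refine ⟨(‖y‖⁻¹ : ℂ) • y, hx₀n, ?_⟩
  set x₀ : X := (‖y‖⁻¹ : ℂ) • y with hx₀
  have hKx₀ : (1 + ε) / 2 * ‖K‖ ≤ ‖K x₀‖ := by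
    have : ‖K x₀‖ = ‖y‖⁻¹ * ‖K y‖ := by
      rw [hx₀, map_smul, norm_smul]
      simp
    rw [this]
    have h1 : (1 : ℝ) ≤ ‖y‖⁻¹ := by
      rw [le_inv_comm₀ one_pos hynorm]
      simpa using hy1.le
    nlinarith
  intro x _ hxdist
  -- the sequence x is bounded
  have hxbdd : ∀ m, x m ∈ Metric.closedBall (0 : X) (1 + ε) := by
    intro m
    rw [Metric.mem_closedBall, dist_zero_right]
    calc ‖x m‖ = ‖(x m - x₀) + x₀‖ := by rw [sub_add_cancel]
      _ ≤ ‖x m - x₀‖ + ‖x₀‖ := norm_add_le _ _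
      _ = ε + 1 := by rw [hxdist m, hx₀n]
      _ = 1 + ε := by ring
  obtain ⟨C, hCcomp, hCsub⟩ :=
    hKcompact.image_closedBall_subset_compact (𝕜₁ := ℂ) (f := (K : X →ₛₗ[RingHom.id ℂ] X)) (1 + ε)
  have hmem : ∀ m, K (x m) ∈ C := fun m => hCsub ⟨x m, hxbdd m, rfl⟩
  obtain ⟨w, hwC, n, hn, hconv⟩ := hCcomp.tendsto_subseq hmem
  refine ⟨n, fun _ => ((‖K‖ : ℂ)⁻¹) • K, hn, ?_, ?_, ?_⟩
  · intro k
    ext v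
    simp only [ContinuousLinearMap.smul_comp, ContinuousLinearMap.comp_smul, hcomm]
  · intro k
    constructor
    · calc ‖((‖K‖ : ℂ)⁻¹) • K‖ ≤ ‖((‖K‖ : ℂ)⁻¹ : ℂ)‖ * ‖K‖ :=
            ContinuousLinearMap.opNorm_smul_le _ _
        _ = ‖K‖⁻¹ * ‖K‖ := by simp
        _ = 1 := inv_mul_cancel₀ hKnorm.ne'
    · have : ‖(((‖K‖ : ℂ)⁻¹) • K) x₀‖ = ‖K‖⁻¹ * ‖K x₀‖ := by
        rw [ContinuousLinearMap.smul_apply, norm_smul]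
        simp
      rw [this]
      calc (1 + ε) / 2 = (1 + ε) / 2 * ‖K‖ * ‖K‖⁻¹ := by
            field_simp
        _ ≤ ‖K‖⁻¹ * ‖K x₀‖ := by
            rw [mul_comm]
            exact mul_le_mul_of_nonneg_left hKx₀ (by positivity)
  · refine ⟨((‖K‖ : ℂ)⁻¹) • w, ?_⟩
    have : (fun k => (((‖K‖ : ℂ)⁻¹) • K) (x (n k))) =
        fun k => ((‖K‖ : ℂ)⁻¹) • (K (x (n k))) := rfl
    rw [this]
    exact hconv.const_smul _
end
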